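/- arXiv:2203.14384 — 3 statements merged into one kernel-verified Lean document; each statement's English description precedes it below -/
import Mathlib

section
/- Let n > 2k and γ > 0, and let v ∈ H_inv be a nonzero vector with Hv = λv for a real number λ. Then the following are equivalent: (i) λ ∈ σ(−γA); (ii) (−γA)v = λv; (iii) v_{w1} = 0 (equivalently, since v ∈ H_inv, v_{w1} = v_{w2} = 0). -/
open Matrix

/-- Vertices of the Johnson graph `J(n,k)`: the `k`-element subsets of `{1,…,n}`. -/
abbrev JV (n k : ℕ) := {s : Finset (Fin n) // s.card = k}

/-- The Johnson graph `J(n,k)`. -/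
def JohnsonGraph (n k : ℕ) : SimpleGraph (JV n k) where
  Adj v w := (v.1 ∩ w.1).card = k - 1 ∧ v ≠ w
  symm := by
    constructor
    intro v w h
    exact ⟨by rw [Finset.inter_comm]; exact h.1, h.2.symm⟩
  loopless := by constructor; intro v h; exact h.2 rfl

instance (n k : ℕ) : DecidableRel (JohnsonGraph n k).Adj :=
  fun _ _ => instDecidableAnd

/-- The (real) adjacency matrix of the Johnson graph `J(n,k)`. -/
noncomputable def JA (n k : ℕ) : Matrix (JV n k) (JV n k) ℝ :=
  (JohnsonGraph n k).adjMatrix ℝ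

/-- The search Hamiltonian `H = -γ•A - e_{w1} e_{w1}ᵀ - e_{w2} e_{w2}ᵀ` on `J(n,k)`. -/
noncomputable def JH (n k : ℕ) (w1 w2 : JV n k) (γ : ℝ) : Matrix (JV n k) (JV n k) ℝ :=
  (-γ) • JA n k - Matrix.vecMulVec (Pi.single w1 1) (Pi.single w1 1)
    - Matrix.vecMulVec (Pi.single w2 1) (Pi.single w2 1)

/-- `μ` is a (real) eigenvalue of the matrix `M`. -/
def IsEig {V : Type*} [Fintype V] (M : Matrix V V ℝ) (μ : ℝ) : Prop :=
  ∃ x, x ≠ 0 ∧ M.mulVec x = μ • x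

/-- The action of a permutation of `{1,…,n}` on `k`-subsets. -/
def permAct {n k : ℕ} (g : Equiv.Perm (Fin n)) (v : JV n k) : JV n k :=
  ⟨v.1.image ⇑g, by rw [Finset.card_image_of_injective _ g.injective]; exact v.2⟩

/-- `g` fixes the set `{w1, w2}` of marked vertices setwise. -/
def fixesW {n k : ℕ} (w1 w2 : JV n k) (g : Equiv.Perm (Fin n)) : Prop :=
  ({permAct g w1, permAct g w2} : Finset (JV n k)) = {w1, w2}

/-- The subspace `H_inv` of vectors invariant under the group `𝔊` of permutations
fixing `{w1, w2}` setwise. -/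
def Hinv {n k : ℕ} (w1 w2 : JV n k) : Set (JV n k → ℝ) :=
  {x | ∀ g : Equiv.Perm (Fin n), fixesW w1 w2 g → ∀ v, x (permAct g v) = x v}


lemma exists_perm_comp {α β : Type*} [Fintype α] [DecidableEq α] [DecidableEq β] (φ ψ : α → β)
    (h : ∀ b, (Finset.univ.filter (fun x => φ x = b)).card
            = (Finset.univ.filter (fun x => ψ x = b)).card) :
    ∃ g : Equiv.Perm α, ∀ x, ψ (g x) = φ x := by
  classical
  have h' : ∀ b, Fintype.card {x // φ x = b} = Fintype.card {x // ψ x = b} := by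
    intro b; rw [Fintype.card_subtype, Fintype.card_subtype]; exact h b
  let E : ∀ b, {x // φ x = b} ≃ {x // ψ x = b} := fun b => Fintype.equivOfCardEq (h' b)
  refine ⟨(Equiv.sigmaFiberEquiv φ).symm.trans ((Equiv.sigmaCongrRight E).trans
    (Equiv.sigmaFiberEquiv ψ)), fun x => ?_⟩
  exact (E (φ x) ⟨x, rfl⟩).2

lemma exists_perm_pair {n : ℕ} (s t a b : Finset (Fin n))
    (hs : s.card = a.card) (ht : t.card = b.card) (hst : (s ∩ t).card = (a ∩ b).card) :
    ∃ g : Equiv.Perm (Fin n), s.image g = a ∧ t.image g = b := by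
  classical
  have key : ∀ (s t : Finset (Fin n)) (b1 b2 : Bool),
      Finset.univ.filter (fun x => (decide (x ∈ s), decide (x ∈ t)) = (b1, b2))
        = (if b1 then s else sᶜ) ∩ (if b2 then t else tᶜ) := by
    intro s t b1 b2
    ext x
    cases b1 <;> cases b2 <;> simp
  have hfib : ∀ bb : Bool × Bool,
      (Finset.univ.filter (fun x => (decide (x ∈ s), decide (x ∈ t)) = bb)).card
        = (Finset.univ.filter (fun x => (decide (x ∈ a), decide (x ∈ b)) = bb)).card := by
    intro bb
    obtain ⟨b1, b2⟩ := bb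
    rw [key s t, key a b]
    have hsc : sᶜ.card = aᶜ.card := by
      rw [Finset.card_compl, Finset.card_compl, hs]
    have h1 : (s \ t).card = (a \ b).card := by
      have := Finset.card_inter_add_card_sdiff s t
      have := Finset.card_inter_add_card_sdiff a b
      omega
    have h2 : (t \ s).card = (b \ a).card := by
      have := Finset.card_inter_add_card_sdiff t s
      have := Finset.card_inter_add_card_sdiff b a
      rw [Finset.inter_comm t s, Finset.inter_comm b a] at *
      omega
    have h3 : (s ∪ t)ᶜ.card = (a ∪ b)ᶜ.card := by
      have := Finset.card_union_add_card_inter s t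
      have := Finset.card_union_add_card_inter a b
      rw [Finset.card_compl, Finset.card_compl]
      omega
    cases b1 <;> cases b2 <;> simp only [Bool.false_eq_true, if_true, if_false]
    · rw [← Finset.compl_union, ← Finset.compl_union]; exact h3
    · rw [Finset.inter_comm, ← Finset.sdiff_eq_inter_compl,
        Finset.inter_comm aᶜ, ← Finset.sdiff_eq_inter_compl]; exact h2
    · rw [← Finset.sdiff_eq_inter_compl, ← Finset.sdiff_eq_inter_compl]; exact h1
    · exact hst
  obtain ⟨g, hg⟩ := exists_perm_comp (fun x => (decide (x ∈ s), decide (x ∈ t)))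
      (fun x => (decide (x ∈ a), decide (x ∈ b))) hfib
  have hmem : ∀ x, (g x ∈ a ↔ x ∈ s) ∧ (g x ∈ b ↔ x ∈ t) := by
    intro x
    have := hg x
    rw [Prod.mk.injEq] at this
    constructor
    · rw [← decide_eq_decide]; exact this.1
    · rw [← decide_eq_decide]; exact this.2
  refine ⟨g, ?_, ?_⟩
  · apply Finset.eq_of_subset_of_card_le
    · intro y hy
      obtain ⟨x, hx, rfl⟩ := Finset.mem_image.1 hy
      exact ((hmem x).1).2 hx
    · rw [Finset.card_image_of_injective _ g.injective]; omega
  · apply Finset.eq_of_subset_of_card_le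
    · intro y hy
      obtain ⟨x, hx, rfl⟩ := Finset.mem_image.1 hy
      exact ((hmem x).2).2 hx
    · rw [Finset.card_image_of_injective _ g.injective]; omega


lemma odd_walk {n k j : ℕ} (hkn : 2*k < n) (hj : j < k) (x : Finset (Fin n)) (hx : x.card = k) :
    ∃ a : ℕ → Finset (Fin n), a 0 = x ∧ a (2*(k-j)+1) = x ∧
      (∀ i, (a i).card = k) ∧ (∀ i, (a i ∩ a (i+1)).card = j) := by
  classical
  set m := k - j with hm
  have hm1 : 1 ≤ m := by omega
  set N := 2*m+1 with hN
  obtain ⟨J, hJx, hJ⟩ := Finset.exists_subset_card_eq (s := x) (n := j) (by omega)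
  have hxc : (m+1) ≤ xᶜ.card := by
    rw [Finset.card_compl, hx, Fintype.card_fin]; omega
  obtain ⟨T, hTx, hT⟩ := Finset.exists_subset_card_eq hxc
  have hxJ : (x \ J).card = m := by rw [Finset.card_sdiff_of_subset hJx, hx, hJ]
  let e1 := (x \ J).orderIsoOfFin hxJ
  let e2 := T.orderIsoOfFin hT
  let f : Fin N → Fin n := fun r =>
    if h : (r : ℕ) < m then (e1 ⟨r, h⟩ : Fin n)
    else (e2 ⟨(r : ℕ) - m, by have h2 := r.2; omega⟩ : Fin n)
  have hf1 : ∀ (r : Fin N), (r:ℕ) < m → f r ∈ x \ J := by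
    intro r h; simp only [f, dif_pos h]; exact (e1 ⟨r, h⟩).2
  have hf2 : ∀ (r : Fin N), ¬ (r:ℕ) < m → f r ∈ T := by
    intro r h; simp only [f, dif_neg h]; exact (e2 _).2
  have hdisjT : ∀ y ∈ T, y ∉ x := by
    intro y hy; have := hTx hy; simpa using this
  have hfinj : Function.Injective f := by
    intro r s h
    by_cases hr : (r:ℕ) < m <;> by_cases hs : (s:ℕ) < m
    · simp only [f, dif_pos hr, dif_pos hs] at h
      have h2 := e1.injective (Subtype.coe_injective h)
      simp only [Fin.mk.injEq] at h2
      exact Fin.ext h2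
    · exfalso
      have h1 := (Finset.mem_sdiff.1 (hf1 r hr)).1
      have h2 := hdisjT _ (hf2 s hs)
      rw [h] at h1
      exact h2 h1
    · exfalso
      have h1 := (Finset.mem_sdiff.1 (hf1 s hs)).1
      have h2 := hdisjT _ (hf2 r hr)
      rw [← h] at h1
      exact h2 h1
    · simp only [f, dif_neg hr, dif_neg hs] at h
      have h2 := e2.injective (Subtype.coe_injective h)
      simp only [Fin.mk.injEq] at h2
      have hr2 := r.2
      have hs2 := s.2
      exact Fin.ext (by omega)
  have hNpos : 0 < N := by omega
  let F : ℕ → Fin n := fun r => f ⟨r % N, Nat.mod_lt _ hNpos⟩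
  have hFmem : ∀ r, F r ∈ x \ J ∨ F r ∈ T := by
    intro r
    by_cases hc : (r % N) < m
    · left; exact hf1 _ hc
    · right; exact hf2 _ hc
  have hFkey : ∀ (c r s : ℕ), r < N → s < N → F (c + r) = F (c + s) → r = s := by
    intro c r s hr hs h
    have h2 : (c + r) % N = (c + s) % N := congrArg Fin.val (hfinj h)
    have h3 : r % N = s % N := Nat.ModEq.add_left_cancel' c h2
    rwa [Nat.mod_eq_of_lt hr, Nat.mod_eq_of_lt hs] at h3
  let B : ℕ → Finset (Fin n) := fun i => (Finset.range m).image (fun r => F (i*m + r))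
  set a : ℕ → Finset (Fin n) := fun i => J ∪ B i with ha
  have hBcard : ∀ i, (B i).card = m := by
    intro i
    rw [Finset.card_image_of_injOn, Finset.card_range]
    intro r hr s hs h
    rw [Finset.mem_coe, Finset.mem_range] at hr hs
    exact hFkey (i*m) r s (by omega) (by omega) h
  have hBJ : ∀ i, Disjoint J (B i) := by
    intro i
    rw [Finset.disjoint_right]
    intro y hy hyJ
    obtain ⟨r, hr, rfl⟩ := Finset.mem_image.1 hy
    rcases hFmem (i*m + r) with h' | h'
    · exact (Finset.mem_sdiff.1 h').2 hyJ
    · exact hdisjT _ h' (hJx hyJ)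
  have hBB : ∀ i, Disjoint (B i) (B (i+1)) := by
    intro i
    rw [Finset.disjoint_left]
    intro y hy hy'
    obtain ⟨r, hr, rfl⟩ := Finset.mem_image.1 hy
    obtain ⟨s, hs, h⟩ := Finset.mem_image.1 hy'
    rw [Finset.mem_range] at hr hs
    have he : (i+1)*m + s = i*m + (m+s) := by ring
    rw [he] at h
    have := hFkey (i*m) (m+s) r (by omega) (by omega) h
    omega
  have hacard : ∀ i, (a i).card = k := by
    intro i
    rw [ha]
    simp only
    rw [Finset.card_union_of_disjoint (hBJ i), hJ, hBcard]
    omega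
  have hainter : ∀ i, (a i ∩ a (i+1)).card = j := by
    intro i
    have h1 : a i ∩ a (i+1) = J ∪ (B i ∩ B (i+1)) := by
      rw [ha]
      simp only
      rw [Finset.union_inter_distrib_left]
    rw [h1, Finset.disjoint_iff_inter_eq_empty.1 (hBB i), Finset.union_empty, hJ]
  have hB0 : B 0 = x \ J := by
    apply Finset.eq_of_subset_of_card_le
    · intro y hy
      obtain ⟨r, hr, rfl⟩ := Finset.mem_image.1 hy
      rw [Finset.mem_range] at hr
      apply hf1
      show ((0*m + r) % N) < m
      rw [zero_mul, zero_add, Nat.mod_eq_of_lt (by omega)]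
      exact hr
    · rw [hxJ, hBcard]
  have ha0 : a 0 = x := by
    rw [ha]
    simp only
    rw [hB0, Finset.union_sdiff_of_subset hJx]
  have hBN : B N = B 0 := by
    apply Finset.image_congr
    intro r hr
    simp only [F]
    apply congrArg f
    apply Fin.ext
    show (N*m + r) % N = (0*m + r) % N
    rw [Nat.mul_add_mod, zero_mul, zero_add]
  have haN : a N = x := by
    rw [ha]; simp only; rw [hBN, ← ha0, ha]
  exact ⟨a, ha0, haN, hacard, hainter⟩

section
variable {n k : ℕ}

lemma permAct_inv (g : Equiv.Perm (Fin n)) (v : JV n k) : permAct g⁻¹ (permAct g v) = v := by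
  apply Subtype.ext
  simp only [permAct, Finset.image_image]
  rw [show (⇑g⁻¹ ∘ ⇑g) = id from funext fun y => g.symm_apply_apply y]
  exact Finset.image_id

def permVEquiv (g : Equiv.Perm (Fin n)) : JV n k ≃ JV n k where
  toFun := permAct g
  invFun := permAct g⁻¹
  left_inv := permAct_inv g
  right_inv := fun v => by simpa using permAct_inv g⁻¹ v

lemma permAct_injective (g : Equiv.Perm (Fin n)) :
    Function.Injective (permAct g : JV n k → JV n k) :=
  (permVEquiv g).injective

lemma adj_permAct (g : Equiv.Perm (Fin n)) (u w : JV n k) :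
    (JohnsonGraph n k).Adj (permAct g u) (permAct g w) ↔ (JohnsonGraph n k).Adj u w := by
  have h1 : ∀ u w : JV n k, (JohnsonGraph n k).Adj u w ↔
      ((u.1 ∩ w.1).card = k - 1 ∧ u ≠ w) := fun _ _ => Iff.rfl
  rw [h1, h1]
  have h2 : (permAct g u).1 ∩ (permAct g w).1 = (u.1 ∩ w.1).image ⇑g := by
    rw [Finset.image_inter _ _ g.injective]; rfl
  rw [h2, Finset.card_image_of_injective _ g.injective]
  constructor
  · rintro ⟨hc, hne⟩
    exact ⟨hc, fun h => hne (by rw [h])⟩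
  · rintro ⟨hc, hne⟩
    exact ⟨hc, fun h => hne (permAct_injective g h)⟩

lemma JA_mulVec_comp (g : Equiv.Perm (Fin n)) (u : JV n k → ℝ) :
    (JA n k).mulVec (fun y => u (permAct g y)) = fun y => ((JA n k).mulVec u) (permAct g y) := by
  funext y
  simp only [JA, Matrix.mulVec, dotProduct]
  rw [← Equiv.sum_comp (permVEquiv g)
    (fun w => (JohnsonGraph n k).adjMatrix ℝ (permAct g y) w * u w)]
  apply Finset.sum_congr rfl
  intro w _
  have : (permVEquiv g) w = permAct g w := rfl
  rw [this]
  congr 1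
  simp only [SimpleGraph.adjMatrix_apply, adj_permAct]

lemma eig_comp (g : Equiv.Perm (Fin n)) (γ lam : ℝ) (u : JV n k → ℝ)
    (hu : ((-γ) • JA n k).mulVec u = lam • u) :
    ((-γ) • JA n k).mulVec (fun y => u (permAct g y)) = lam • (fun y => u (permAct g y)) := by
  have hu' : (-γ) • ((JA n k).mulVec u) = lam • u := by
    rw [← Matrix.smul_mulVec]; exact hu
  rw [Matrix.smul_mulVec, JA_mulVec_comp]
  funext y
  have := congrFun hu' (permAct g y)
  simpa using this

end

theorem stmt9 (n k : ℕ) (hk : 1 ≤ k) (hkn : 2 * k < n) (γ : ℝ) (hγ : 0 < γ)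
    (w1 w2 : JV n k) (hw : w1 ≠ w2)
    (lam : ℝ) (v : JV n k → ℝ) (hvinv : v ∈ Hinv w1 w2) (hv0 : v ≠ 0)
    (hHv : (JH n k w1 w2 γ).mulVec v = lam • v) :
    (IsEig ((-γ) • JA n k) lam ↔ ((-γ) • JA n k).mulVec v = lam • v) ∧
      (((-γ) • JA n k).mulVec v = lam • v ↔ v w1 = 0) := by
  classical
  set A := (-γ) • JA n k with hA
  have hAT : Aᵀ = A := by
    rw [hA, JA, Matrix.transpose_smul, SimpleGraph.transpose_adjMatrix]
  have hsingle : ∀ (w : JV n k) (u : JV n k → ℝ), Pi.single w (1:ℝ) ⬝ᵥ u = u w := by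
    intro w u; rw [single_dotProduct, one_mul]
  have hvmv : ∀ (w : JV n k),
      (Matrix.vecMulVec (Pi.single w (1:ℝ)) (Pi.single w 1)).mulVec v
        = (v w) • (Pi.single w 1 : JV n k → ℝ) := by
    intro w
    funext y
    simp only [Matrix.mulVec, Matrix.vecMulVec_apply, dotProduct, Pi.smul_apply,
      smul_eq_mul, mul_assoc, ← Finset.mul_sum]
    have h := hsingle w v
    simp only [dotProduct] at h
    rw [h]
    ring
  have hK : A.mulVec v = lam • v + ((v w1) • (Pi.single w1 1 : JV n k → ℝ)
      + (v w2) • (Pi.single w2 1 : JV n k → ℝ)) := by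
    rw [JH, ← hA, Matrix.sub_mulVec, Matrix.sub_mulVec, hvmv w1, hvmv w2,
      sub_sub, sub_eq_iff_eq_add] at hHv
    exact hHv
  -- swap permutation: v w2 = v w1
  obtain ⟨g, hg1, hg2⟩ := exists_perm_pair w1.1 w2.1 w2.1 w1.1
    (by rw [w1.2, w2.2]) (by rw [w1.2, w2.2]) (by rw [Finset.inter_comm])
  have hpg1 : permAct g w1 = w2 := Subtype.ext hg1
  have hpg2 : permAct g w2 = w1 := Subtype.ext hg2
  have hfix : fixesW w1 w2 g := by
    show ({permAct g w1, permAct g w2} : Finset (JV n k)) = {w1, w2}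
    rw [hpg1, hpg2, Finset.pair_comm]
  have hvw2 : v w2 = v w1 := by
    have := hvinv g hfix w1
    rwa [hpg1] at this
  have P2 : (A.mulVec v = lam • v ↔ v w1 = 0) := by
    constructor
    · intro h
      have h3 : lam • v = lam • v + ((v w1) • (Pi.single w1 1 : JV n k → ℝ)
          + (v w2) • (Pi.single w2 1 : JV n k → ℝ)) := by
        have h3 := hK
        rw [h] at h3
        exact h3
      have h4 := left_eq_add.mp h3
      have h5 := congrFun h4 w1
      simp only [Pi.add_apply, Pi.smul_apply, Pi.single_eq_same, smul_eq_mul, mul_one,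
        Pi.single_eq_of_ne hw, mul_zero, add_zero, Pi.zero_apply] at h5
      exact h5
    · intro h
      rw [hK, hvw2, h]
      simp
  refine ⟨?_, P2⟩
  constructor
  · rintro ⟨u, hu0, hu⟩
    apply P2.mpr
    by_contra hc
    have step3a : ∀ u' : JV n k → ℝ, A.mulVec u' = lam • u' → u' w1 + u' w2 = 0 := by
      intro u' hu'
      have h1 : u' ⬝ᵥ (A.mulVec v) = lam * (u' ⬝ᵥ v) := by
        rw [Matrix.dotProduct_mulVec]
        have h2 : u' ᵥ* A = lam • u' := by
          rw [← hAT, Matrix.vecMul_transpose]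
          exact hu'
        rw [h2, smul_dotProduct]
        rfl
      have h2 : u' ⬝ᵥ (A.mulVec v)
          = lam * (u' ⬝ᵥ v) + (v w1) * (u' w1) + (v w1) * (u' w2) := by
        rw [hK, hvw2]
        simp only [dotProduct_add, dotProduct_smul, dotProduct_single,
          smul_eq_mul, mul_one, smul_dotProduct]
        ring
      have h3 : (v w1) * (u' w1 + u' w2) = 0 := by
        rw [h2] at h1
        linarith [h1]
      rcases mul_eq_zero.1 h3 with h | h
      · exact absurd h hc
      · exact h
    have step3b : ∀ a b : JV n k, (a.1 ∩ b.1).card = (w1.1 ∩ w2.1).card → u a + u b = 0 := by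
      intro a b hab
      obtain ⟨g', hga, hgb⟩ := exists_perm_pair w1.1 w2.1 a.1 b.1
        (by rw [w1.2, a.2]) (by rw [w2.2, b.2]) hab.symm
      have hu'' := eig_comp g' γ lam u hu
      have h3 := step3a _ hu''
      have e1 : permAct g' w1 = a := Subtype.ext hga
      have e2 : permAct g' w2 = b := Subtype.ext hgb
      rwa [e1, e2] at h3
    have hjk : (w1.1 ∩ w2.1).card < k := by
      have hle : (w1.1 ∩ w2.1).card ≤ k :=
        (Finset.card_le_card Finset.inter_subset_left).trans_eq w1.2
      rcases lt_or_eq_of_le hle with h | h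
      · exact h
      · exfalso
        have h1 : w1.1 ∩ w2.1 = w1.1 :=
          Finset.eq_of_subset_of_card_le Finset.inter_subset_left (by rw [h, w1.2])
        have h2 : w1.1 ⊆ w2.1 := by rw [← h1]; exact Finset.inter_subset_right
        have h3 := Finset.eq_of_subset_of_card_le h2 (by rw [w1.2, w2.2])
        exact hw (Subtype.ext h3)
    have huz : ∀ z : JV n k, u z = 0 := by
      intro z
      obtain ⟨a, ha0, haN, hacard, hainter⟩ := odd_walk hkn hjk z.1 z.2
      set jj := (w1.1 ∩ w2.1).card with hjj
      let W : ℕ → JV n k := fun i => ⟨a i, hacard i⟩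
      have hstep : ∀ i, u (W (i+1)) = - u (W i) := by
        intro i
        have := step3b (W i) (W (i+1)) (hainter i)
        linarith
      have hpow : ∀ i, u (W i) = (-1)^i * u (W 0) := by
        intro i
        induction i with
        | zero => simp
        | succ i ih => rw [hstep i, ih]; ring
      have hNodd := hpow (2*(k-jj)+1)
      have hAeq : W (2*(k-jj)+1) = W 0 := Subtype.ext (by show a _ = a 0; rw [haN, ha0])
      have hz : W 0 = z := Subtype.ext ha0
      rw [hAeq, hz] at hNodd
      have hodd : ((-1:ℝ))^(2*(k-jj)+1) = -1 := Odd.neg_one_pow ⟨k-jj, by ring⟩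
      rw [hodd] at hNodd
      linarith
    exact absurd (funext huz) hu0
  · intro h
    exact ⟨v, hv0, h⟩
end

section
/- Let n > 2k and γ > 0. Let v ∈ H_inv be a nonzero vector with Hv = λv for a real number λ ∉ σ(−γA). Then 1 + Σ_{ℓ=0}^k (e_{w1}ᵀ P_ℓ e_{w1})/(λ + γφ_ℓ) + Σ_{ℓ=0}^k (e_{w1}ᵀ P_ℓ e_{w2})/(λ + γφ_ℓ) = 0 (i.e., m_1 + m_3 = 0). -/
open Matrix

/-- The eigenvalues `φ_ℓ = (k−ℓ)(n−k−ℓ) − ℓ` of the Johnson graph `J(n,k)`. -/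
noncomputable def jphi (n k : ℕ) (ℓ : Fin (k+1)) : ℝ :=
  ((k : ℝ) - (ℓ : ℕ)) * ((n : ℝ) - (k : ℝ) - (ℓ : ℕ)) - (ℓ : ℕ)

/-- `P` is the orthogonal projection onto the `μ`-eigenspace of the symmetric matrix `A`. -/
def IsOrthProj {V : Type*} [Fintype V] (A : Matrix V V ℝ) (μ : ℝ) (P : Matrix V V ℝ) : Prop :=
  Pᵀ = P ∧ P * P = P ∧ (∀ x, A.mulVec (P.mulVec x) = μ • P.mulVec x) ∧
    (∀ x, A.mulVec x = μ • x → P.mulVec x = x)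

/-- The sum `∑_{ℓ=1}^{k} (e_aᵀ P_ℓ e_b) / (φ_0 − φ_ℓ)^r`. -/
noncomputable def Ssum (n k : ℕ) (P : Fin (k+1) → Matrix (JV n k) (JV n k) ℝ)
    (a b : JV n k) (r : ℕ) : ℝ :=
  ∑ ℓ ∈ Finset.Ioi (0 : Fin (k+1)), P ℓ a b / (jphi n k 0 - jphi n k ℓ) ^ r

/-- Inclusion matrix between levels `j` and `j+1`. -/
noncomputable def Wm (n j : ℕ) : Matrix (JV n j) (JV n (j+1)) ℝ :=
  fun s t => if s.1 ⊆ t.1 then 1 else 0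

/-- Distance-1 matrix at level `j` (the adjacency matrix of `J(n,j)`). -/
noncomputable def Madj (n j : ℕ) : Matrix (JV n j) (JV n j) ℝ :=
  fun s s' => if (s.1 ∩ s'.1).card + 1 = j ∧ s ≠ s' then 1 else 0

lemma count_superset {n : ℕ} (u : Finset (Fin n)) (m : ℕ) (hum : u.card ≤ m) :
    (Finset.univ.filter (fun t : JV n m => u ⊆ t.1)).card
      = Nat.choose (n - u.card) (m - u.card) := by
  have hc : (uᶜ : Finset (Fin n)).card = n - u.card := by
    simp [Finset.card_compl]
  rw [← hc, ← Finset.card_powersetCard (m - u.card) uᶜ]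
  refine Finset.card_bij' (fun t _ => t.1 \ u)
    (fun s hs => (⟨s ∪ u, by
      obtain ⟨hsub, hcard⟩ := Finset.mem_powersetCard.1 hs
      have hdisj : Disjoint s u :=
        Finset.disjoint_left.2 fun a has hau => (Finset.mem_compl.1 (hsub has)) hau
      rw [Finset.card_union_of_disjoint hdisj, hcard]
      omega⟩ : JV n m)) ?_ ?_ ?_ ?_
  · intro t ht
    obtain ⟨-, hsub⟩ := Finset.mem_filter.1 ht
    refine Finset.mem_powersetCard.2 ⟨fun a ha => ?_, ?_⟩
    · obtain ⟨hat, hau⟩ := Finset.mem_sdiff.1 ha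
      exact Finset.mem_compl.2 hau
    · rw [Finset.card_sdiff_of_subset hsub, t.2]
  · intro s hs
    simp only [Finset.mem_filter, Finset.mem_univ, true_and]
    exact Finset.subset_union_right
  · intro t ht
    obtain ⟨-, hsub⟩ := Finset.mem_filter.1 ht
    exact Subtype.ext (by simp [Finset.sdiff_union_of_subset hsub])
  · intro s hs
    obtain ⟨hsub, hcard⟩ := Finset.mem_powersetCard.1 hs
    have hdisj : Disjoint s u :=
      Finset.disjoint_left.2 fun a has hau => (Finset.mem_compl.1 (hsub has)) hau
    simp [Finset.union_sdiff_cancel_right hdisj]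

lemma count_superset_zero {n : ℕ} (u : Finset (Fin n)) (m : ℕ) (hum : m < u.card) :
    (Finset.univ.filter (fun t : JV n m => u ⊆ t.1)).card = 0 := by
  rw [Finset.card_eq_zero]
  refine Finset.eq_empty_of_forall_notMem fun t ht => ?_
  obtain ⟨-, hsub⟩ := Finset.mem_filter.1 ht
  have := Finset.card_le_card hsub
  rw [t.2] at this
  omega

lemma count_subset {n : ℕ} (w : Finset (Fin n)) (j : ℕ) :
    (Finset.univ.filter (fun s : JV n j => s.1 ⊆ w)).card = Nat.choose w.card j := by
  rw [← Finset.card_powersetCard j w]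
  refine Finset.card_bij' (fun s _ => s.1)
    (fun b hb => (⟨b, (Finset.mem_powersetCard.1 hb).2⟩ : JV n j)) ?_ ?_ ?_ ?_
  · intro s hs
    exact Finset.mem_powersetCard.2 ⟨(Finset.mem_filter.1 hs).2, s.2⟩
  · intro b hb
    simp only [Finset.mem_filter, Finset.mem_univ, true_and]
    exact (Finset.mem_powersetCard.1 hb).1
  · intro s _; rfl
  · intro b _; rfl
lemma WWt {n : ℕ} (j : ℕ) (hjn : j ≤ n) :
    Wm n j * (Wm n j)ᵀ = Madj n j + (((n : ℝ) - j)) • 1 := by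
  ext s s'
  have hs := s.2
  have hs' := s'.2
  rw [Matrix.mul_apply]
  simp only [Wm, Matrix.transpose_apply, ite_mul, one_mul, zero_mul]
  have hre : ∀ t : JV n (j+1), (if s.1 ⊆ t.1 then if s'.1 ⊆ t.1 then (1:ℝ) else 0 else 0)
      = if s.1 ∪ s'.1 ⊆ t.1 then 1 else 0 := by
    intro t
    by_cases h1 : s.1 ⊆ t.1 <;> by_cases h2 : s'.1 ⊆ t.1 <;>
      simp [h1, h2, Finset.union_subset_iff]
  rw [Finset.sum_congr rfl (fun t _ => hre t), Finset.sum_boole]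
  by_cases hss : s = s'
  · subst hss
    rw [Finset.union_self, count_superset s.1 (j+1) (by rw [s.2]; omega)]
    simp only [Madj, Matrix.add_apply, Matrix.smul_apply, Matrix.one_apply_eq, smul_eq_mul,
      mul_one, hs]
    rw [if_neg (by simp)]
    have h1 : j + 1 - j = 1 := by omega
    rw [h1, Nat.choose_one_right, Nat.cast_sub hjn]
    ring
  · have hne : s.1 ≠ s'.1 := fun h => hss (Subtype.ext h)
    have hinter : (s.1 ∩ s'.1).card < j := by
      rcases lt_or_eq_of_le (le_trans (Finset.card_le_card Finset.inter_subset_left) hs.le) with h | h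
      · exact h
      · exfalso
        have h1 : s.1 ∩ s'.1 = s.1 := Finset.eq_of_subset_of_card_le Finset.inter_subset_left (by omega)
        have h2 : s.1 ⊆ s'.1 := by rw [← h1]; exact Finset.inter_subset_right
        exact hne (Finset.eq_of_subset_of_card_le h2 (by omega))
    have hcu : (s.1 ∪ s'.1).card + (s.1 ∩ s'.1).card = j + j := by
      rw [Finset.card_union_add_card_inter, hs, hs']
    simp only [Madj, Matrix.add_apply, Matrix.smul_apply, smul_eq_mul,
      Matrix.one_apply_ne hss, mul_zero, add_zero]
    by_cases hadj : (s.1 ∩ s'.1).card + 1 = j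
    · rw [count_superset _ (j+1) (by omega)]
      have : (s.1 ∪ s'.1).card = j + 1 := by omega
      rw [this, if_pos ⟨hadj, hss⟩]
      simp
    · rw [count_superset_zero _ (j+1) (by omega), if_neg (by tauto)]
      simp

lemma WtW {n : ℕ} (j : ℕ) :
    (Wm n j)ᵀ * Wm n j = Madj n (j+1) + (((j : ℝ) + 1)) • 1 := by
  ext t t'
  have ht := t.2
  have ht' := t'.2
  rw [Matrix.mul_apply]
  simp only [Wm, Matrix.transpose_apply, ite_mul, one_mul, zero_mul]
  have hre : ∀ s : JV n j, (if s.1 ⊆ t.1 then if s.1 ⊆ t'.1 then (1:ℝ) else 0 else 0)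
      = if s.1 ⊆ t.1 ∩ t'.1 then 1 else 0 := by
    intro s
    by_cases h1 : s.1 ⊆ t.1 <;> by_cases h2 : s.1 ⊆ t'.1 <;>
      simp [h1, h2, Finset.subset_inter_iff]
  rw [Finset.sum_congr rfl (fun s _ => hre s), Finset.sum_boole, count_subset]
  by_cases htt : t = t'
  · subst htt
    rw [Finset.inter_self, ht, Nat.choose_succ_self_right]
    simp only [Madj, Matrix.add_apply, Matrix.smul_apply, Matrix.one_apply_eq, smul_eq_mul, mul_one]
    rw [if_neg (by simp)]
    push_cast
    ring
  · have hne : t.1 ≠ t'.1 := fun h => htt (Subtype.ext h)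
    have hinter : (t.1 ∩ t'.1).card < j + 1 := by
      rcases lt_or_eq_of_le (le_trans (Finset.card_le_card Finset.inter_subset_left) ht.le) with h | h
      · exact h
      · exfalso
        have h1 : t.1 ∩ t'.1 = t.1 := Finset.eq_of_subset_of_card_le Finset.inter_subset_left (by omega)
        have h2 : t.1 ⊆ t'.1 := by rw [← h1]; exact Finset.inter_subset_right
        exact hne (Finset.eq_of_subset_of_card_le h2 (by omega))
    simp only [Madj, Matrix.add_apply, Matrix.smul_apply, smul_eq_mul,
      Matrix.one_apply_ne htt, mul_zero, add_zero]
    by_cases hadj : (t.1 ∩ t'.1).card + 1 = j + 1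
    · have : (t.1 ∩ t'.1).card = j := by omega
      rw [this, Nat.choose_self, if_pos ⟨rfl, htt⟩]
      simp
    · rw [Nat.choose_eq_zero_of_lt (by omega), if_neg (by tauto)]
      simp
lemma Madj_eq_JA {n k : ℕ} (hk : 1 ≤ k) : Madj n k = JA n k := by
  ext s s'
  simp only [Madj, JA, SimpleGraph.adjMatrix_apply, JohnsonGraph]
  have h : ((s.1 ∩ s'.1).card + 1 = k ∧ s ≠ s') ↔ ((s.1 ∩ s'.1).card = k - 1 ∧ s ≠ s') := by
    constructor <;> rintro ⟨h1, h2⟩ <;> exact ⟨by omega, h2⟩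
  exact if_congr h rfl rfl

/-- Allowed eigenvalues at level `j`. -/
def okEv (n j : ℕ) (μ : ℝ) : Prop :=
  ∃ ℓ m : ℕ, ℓ + m = j ∧ μ = (m : ℝ) * ((n : ℝ) - 2*ℓ - m) - ℓ

/-- The span of eigenvectors of `Madj n j` with allowed eigenvalues. -/
noncomputable def ESub (n j : ℕ) : Submodule ℝ (JV n j → ℝ) :=
  Submodule.span ℝ {x | ∃ μ : ℝ, okEv n j μ ∧ (Madj n j).mulVec x = μ • x}

lemma Madj_succ {n : ℕ} (j : ℕ) :
    Madj n (j+1) = (Wm n j)ᵀ * Wm n j - (((j : ℝ) + 1)) • 1 :=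
  eq_sub_of_add_eq (WtW j).symm

lemma ladder_complete {n : ℕ} : ∀ j : ℕ, j ≤ n → ∀ x : JV n j → ℝ, x ∈ ESub n j := by
  intro j
  induction j with
  | zero =>
    intro _ x
    refine Submodule.subset_span ⟨0, ⟨0, 0, rfl, by norm_num⟩, ?_⟩
    have h0 : Madj n 0 = 0 := by
      ext s s'; simp [Madj]
    simp [h0]
  | succ j ih =>
    intro hjn x
    have hj : j ≤ n := by omega
    set D := (Wm n j).mulVecLin with hD
    set U := ((Wm n j)ᵀ).mulVecLin with hU
    have hdisj : Disjoint (LinearMap.ker D) (LinearMap.range U) := by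
      rw [Submodule.disjoint_def]
      rintro x hxker ⟨y, rfl⟩
      have hk0 : (Wm n j).mulVec (U y) = 0 := by
        have := LinearMap.mem_ker.1 hxker
        rwa [hD, Matrix.mulVecLin_apply] at this
      have h1 : (U y) ⬝ᵥ (U y) = 0 := by
        have h2 : (U y) ⬝ᵥ ((Wm n j)ᵀ).mulVec y = ((Wm n j).mulVec (U y)) ⬝ᵥ y := by
          rw [Matrix.dotProduct_mulVec, Matrix.vecMul_transpose]
        have h3 : U y = ((Wm n j)ᵀ).mulVec y := by rw [hU, Matrix.mulVecLin_apply]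
        rw [← h3] at h2
        rw [h2, hk0, zero_dotProduct]
      exact dotProduct_self_eq_zero.1 h1
    have hsup : LinearMap.ker D ⊔ LinearMap.range U = ⊤ := by
      apply Submodule.eq_top_of_finrank_eq
      have h1 := Submodule.finrank_sup_add_finrank_inf_eq (LinearMap.ker D) (LinearMap.range U)
      rw [Disjoint.eq_bot hdisj, finrank_bot] at h1
      have h2 : Module.finrank ℝ (LinearMap.range U) = Module.finrank ℝ (LinearMap.range D) := by
        show ((Wm n j)ᵀ).rank = (Wm n j).rank
        exact Matrix.rank_transpose _
      have h3 := LinearMap.finrank_range_add_finrank_ker D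
      omega
    obtain ⟨a, ha, b, hb, rfl⟩ := Submodule.mem_sup.1 (hsup ▸ Submodule.mem_top (x := x))
    refine Submodule.add_mem _ ?_ ?_
    · refine Submodule.subset_span ⟨-((j:ℝ)+1), ⟨j+1, 0, by omega, by push_cast; ring⟩, ?_⟩
      have hka : (Wm n j).mulVec a = 0 := by
        have := LinearMap.mem_ker.1 ha
        rwa [hD, Matrix.mulVecLin_apply] at this
      rw [Madj_succ, Matrix.sub_mulVec, ← Matrix.mulVec_mulVec, hka, Matrix.mulVec_zero,
        Matrix.smul_mulVec, Matrix.one_mulVec]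
      match_scalars <;> ring
    · obtain ⟨y, rfl⟩ := hb
      have hy := ih hj y
      have hmap : Submodule.map U (ESub n j) ≤ ESub n (j+1) := by
        rw [ESub, Submodule.map_span, Submodule.span_le]
        rintro _ ⟨z, ⟨μ, ⟨ℓ, m, hlm, hμ⟩, hz⟩, rfl⟩
        have hUz : U z = ((Wm n j)ᵀ).mulVec z := by rw [hU, Matrix.mulVecLin_apply]
        refine Submodule.subset_span ⟨μ + (n : ℝ) - 2*j - 1, ⟨ℓ, m+1, by omega, ?_⟩, ?_⟩
        · push_cast
          have hm : (m : ℝ) = (j : ℝ) - ℓ := by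
            have : (ℓ : ℝ) + m = j := by exact_mod_cast congrArg (Nat.cast : ℕ → ℝ) hlm
            linarith
          rw [hμ, hm]; ring
        · have hWWt : (Wm n j).mulVec (((Wm n j)ᵀ).mulVec z) = (μ + ((n:ℝ) - j)) • z := by
            rw [Matrix.mulVec_mulVec, WWt j hj, Matrix.add_mulVec, hz,
              Matrix.smul_mulVec, Matrix.one_mulVec]
            match_scalars <;> ring
          rw [hUz, Madj_succ, Matrix.sub_mulVec, ← Matrix.mulVec_mulVec, hWWt,
            Matrix.smul_mulVec, Matrix.one_mulVec, Matrix.mulVec_smul]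
          match_scalars <;> ring
      exact hmap ⟨y, hy, rfl⟩
lemma jphi_inj {n k : ℕ} (hkn : 2 * k < n) : Function.Injective (jphi n k) := by
  intro i j hij
  have hi : (i : ℕ) ≤ k := by omega
  have hj : (j : ℕ) ≤ k := by omega
  have hiR : ((i : ℕ) : ℝ) ≤ k := by exact_mod_cast hi
  have hjR : ((j : ℕ) : ℝ) ≤ k := by exact_mod_cast hj
  have hnR : 2 * (k : ℝ) < n := by exact_mod_cast hkn
  simp only [jphi] at hij
  have h2 : (((i:ℕ):ℝ) - ((j:ℕ):ℝ)) * (((i:ℕ):ℝ) + ((j:ℕ):ℝ) - (n:ℝ) - 1) = 0 := by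
    linear_combination hij
  have h3 : ((i:ℕ):ℝ) + ((j:ℕ):ℝ) - (n:ℝ) - 1 ≠ 0 := by nlinarith
  have h4 : ((i:ℕ):ℝ) = ((j:ℕ):ℝ) := by
    rcases mul_eq_zero.1 h2 with h | h
    · linarith
    · exact absurd h h3
  have h5 : (i : ℕ) = (j : ℕ) := by exact_mod_cast h4
  exact Fin.ext h5

/-- Every vector at level `k` decomposes into eigenvectors of `JA n k`
with eigenvalues `jphi n k ℓ`. -/
lemma eigen_decomp {n k : ℕ} (hk : 1 ≤ k) (hkn : 2 * k < n) (x : JV n k → ℝ) :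
    ∃ y : Fin (k+1) → (JV n k → ℝ),
      (∀ ℓ, (JA n k).mulVec (y ℓ) = jphi n k ℓ • y ℓ) ∧ x = ∑ ℓ, y ℓ := by
  classical
  -- the eigenspaces as submodules
  set Eig : Fin (k+1) → Submodule ℝ (JV n k → ℝ) := fun ℓ =>
    LinearMap.ker ((JA n k).mulVecLin - jphi n k ℓ • LinearMap.id) with hEig
  have hmem : ∀ ℓ (z : JV n k → ℝ), z ∈ Eig ℓ ↔ (JA n k).mulVec z = jphi n k ℓ • z := by
    intro ℓ z
    rw [hEig]
    simp only [LinearMap.mem_ker, LinearMap.sub_apply, Matrix.mulVecLin_apply,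
      LinearMap.smul_apply, LinearMap.id_apply, sub_eq_zero]
  have hx : x ∈ ⨆ ℓ : Fin (k+1), Eig ℓ := by
    have hx0 := ladder_complete k (by omega) x
    rw [ESub] at hx0
    refine Submodule.span_le.2 ?_ hx0
    rintro z ⟨μ, ⟨ℓ, m, hlm, hμ⟩, hz⟩
    have hℓ : ℓ < k + 1 := by omega
    have hμ' : μ = jphi n k ⟨ℓ, hℓ⟩ := by
      have hm : (m : ℝ) = (k : ℝ) - ℓ := by
        have : (ℓ : ℝ) + m = k := by exact_mod_cast congrArg (Nat.cast : ℕ → ℝ) hlm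
        linarith
      rw [hμ, hm, jphi]
      push_cast
      ring
    have : z ∈ Eig ⟨ℓ, hℓ⟩ := by
      rw [hmem, ← Madj_eq_JA hk, hz, hμ']
    exact Submodule.mem_iSup_of_mem ⟨ℓ, hℓ⟩ this
  obtain ⟨f, hf, hsum⟩ := (Submodule.mem_iSup_iff_exists_finsupp Eig x).1 hx
  refine ⟨fun ℓ => f ℓ, fun ℓ => (hmem ℓ (f ℓ)).1 (hf ℓ), ?_⟩
  rw [← hsum, Finsupp.sum_fintype]
  intro; rfl

/-- Completeness of the projection family. -/
lemma sumP {n k : ℕ} (hk : 1 ≤ k) (hkn : 2 * k < n)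
    (P : Fin (k+1) → Matrix (JV n k) (JV n k) ℝ)
    (hP : ∀ ℓ, IsOrthProj (JA n k) (jphi n k ℓ) (P ℓ)) (x : JV n k → ℝ) :
    ∑ ℓ, (P ℓ).mulVec x = x := by
  obtain ⟨y, hy, rfl⟩ := eigen_decomp hk hkn x
  have hsymA : (JA n k)ᵀ = JA n k := SimpleGraph.isSymm_adjMatrix _
  have key : ∀ ℓ i, (P ℓ).mulVec (y i) = if i = ℓ then y ℓ else 0 := by
    intro ℓ i
    by_cases hiℓ : i = ℓ
    · subst hiℓ
      rw [if_pos rfl]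
      exact (hP i).2.2.2 (y i) (hy i)
    · rw [if_neg hiℓ]
      set u := (P ℓ).mulVec (y i) with hu
      have hAu : (JA n k).mulVec u = jphi n k ℓ • u := (hP ℓ).2.2.1 (y i)
      have horth : (y i) ⬝ᵥ u = 0 := by
        have h1 : (y i) ⬝ᵥ ((JA n k).mulVec u) = ((JA n k).mulVec (y i)) ⬝ᵥ u := by
          rw [Matrix.dotProduct_mulVec, ← Matrix.mulVec_transpose, hsymA]
        rw [hy i, hAu, smul_dotProduct, dotProduct_smul, smul_eq_mul,
          smul_eq_mul] at h1
        have hne : jphi n k ℓ ≠ jphi n k i := fun h => hiℓ (jphi_inj hkn h.symm)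
        have h4 := sub_eq_zero.2 h1
        rw [← sub_mul] at h4
        rcases mul_eq_zero.1 h4 with h | h
        · exact absurd (sub_eq_zero.1 h) hne
        · exact h
      have huu : u ⬝ᵥ u = 0 := by
        have h2 : y i ⬝ᵥ ((P ℓ).mulVec u) = u ⬝ᵥ u := by
          rw [Matrix.dotProduct_mulVec, ← Matrix.mulVec_transpose, (hP ℓ).1, ← hu]
        have h3 : (P ℓ).mulVec u = u := by
          rw [hu, Matrix.mulVec_mulVec, (hP ℓ).2.1]
        rw [← h2, h3, horth]
      exact dotProduct_self_eq_zero.1 huu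
  have hlin : ∀ ℓ, (P ℓ).mulVec (∑ i, y i) = ∑ i, (P ℓ).mulVec (y i) := by
    intro ℓ
    simp only [← Matrix.mulVecLin_apply, map_sum]
  rw [Finset.sum_congr rfl (fun ℓ _ => hlin ℓ)]
  rw [Finset.sum_congr rfl (fun ℓ _ => Finset.sum_congr rfl (fun i _ => key ℓ i))]
  simp
lemma johnson_exists_swap {n k : ℕ} (w1 w2 : JV n k) :
    ∃ g : Equiv.Perm (Fin n), fixesW w1 w2 g ∧ permAct g w1 = w2 := by
  classical
  set d1 := w1.1 \ w2.1 with hd1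
  set d2 := w2.1 \ w1.1 with hd2
  have hcard : d1.card = d2.card := by
    rw [hd1, hd2, Finset.card_sdiff_comm (w1.2.trans w2.2.symm)]
  set e := Finset.equivOfCardEq hcard with he
  set f : Fin n → Fin n := fun a =>
    if h : a ∈ d1 then (e ⟨a, h⟩ : Fin n)
    else if h : a ∈ d2 then (e.symm ⟨a, h⟩ : Fin n) else a with hf
  have hd12 : ∀ a, a ∈ d1 → a ∉ d2 := by
    intro a ha hb
    exact (Finset.mem_sdiff.1 hb).2 (Finset.mem_sdiff.1 ha).1
  have hfd1 : ∀ a (h : a ∈ d1), f a = (e ⟨a, h⟩ : Fin n) := by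
    intro a h; rw [hf]; simp [h]
  have hfd2 : ∀ a (h : a ∈ d2), f a = (e.symm ⟨a, h⟩ : Fin n) := by
    intro a h
    rw [hf]
    have : a ∉ d1 := fun h1 => hd12 a h1 h
    simp [this, h]
  have hfid : ∀ a, a ∉ d1 → a ∉ d2 → f a = a := by
    intro a h1 h2; rw [hf]; simp [h1, h2]
  have hinv : Function.Involutive f := by
    intro a
    by_cases h1 : a ∈ d1
    · rw [hfd1 a h1]
      have hm : ((e ⟨a, h1⟩ : {x // x ∈ d2}) : Fin n) ∈ d2 := (e ⟨a, h1⟩).2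
      rw [hfd2 _ hm]
      have : (⟨(e ⟨a, h1⟩ : Fin n), hm⟩ : {x // x ∈ d2}) = e ⟨a, h1⟩ := rfl
      rw [this, Equiv.symm_apply_apply]
    · by_cases h2 : a ∈ d2
      · rw [hfd2 a h2]
        have hm : ((e.symm ⟨a, h2⟩ : {x // x ∈ d1}) : Fin n) ∈ d1 := (e.symm ⟨a, h2⟩).2
        rw [hfd1 _ hm]
        have : (⟨(e.symm ⟨a, h2⟩ : Fin n), hm⟩ : {x // x ∈ d1}) = e.symm ⟨a, h2⟩ := rfl
        rw [this, Equiv.apply_symm_apply]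
      · rw [hfid a h1 h2, hfid a h1 h2]
  set g := hinv.toPerm f with hg
  have hgf : ⇑g = f := rfl
  have himg : ∀ (u u' : JV n k), u.1 \ u'.1 = d1 → u'.1 \ u.1 = d2 → permAct g u = u' := by
    intro u u' h1 h2
    have hsub : u.1.image f ⊆ u'.1 := by
      intro b hb
      obtain ⟨a, ha, rfl⟩ := Finset.mem_image.1 hb
      by_cases hx : a ∈ d1
      · rw [hfd1 a hx]
        have hm : ((e ⟨a, hx⟩ : {x // x ∈ d2}) : Fin n) ∈ d2 := (e ⟨a, hx⟩).2
        have hm2 : ((e ⟨a, hx⟩ : {x // x ∈ d2}) : Fin n) ∈ u'.1 \ u.1 := by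
          rw [h2]; exact hm
        exact (Finset.mem_sdiff.1 hm2).1
      · have hau' : a ∈ u'.1 := by
          by_contra hnu
          exact hx (h1 ▸ Finset.mem_sdiff.2 ⟨ha, hnu⟩)
        have hx2 : a ∉ d2 := by
          rw [← h2]
          intro hm
          exact (Finset.mem_sdiff.1 hm).2 ha
        rw [hfid a hx hx2]
        exact hau'
    have hcard2 : u'.1.card ≤ (u.1.image f).card := by
      rw [Finset.card_image_of_injective _ hinv.injective, u.2, u'.2]
    exact Subtype.ext (Finset.eq_of_subset_of_card_le hsub hcard2)
  have h12 : permAct g w1 = w2 := himg w1 w2 rfl rfl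
  have hinv2 : ∀ v4 : JV n k, permAct g (permAct g v4) = v4 := by
    intro v4
    refine Subtype.ext ?_
    show (v4.1.image ⇑g).image ⇑g = v4.1
    rw [Finset.image_image]
    have hcomp : ⇑g ∘ ⇑g = id := funext fun a => hinv a
    rw [hcomp, Finset.image_id]
  have h21 : permAct g w2 = w1 := by
    rw [← h12, hinv2]
  refine ⟨g, ?_, h12⟩
  rw [fixesW, h12, h21, Finset.pair_comm]
lemma mat_ext_mulVec {V : Type*} [Fintype V] [DecidableEq V] {M N : Matrix V V ℝ}
    (h : ∀ x, M.mulVec x = N.mulVec x) : M = N := by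
  ext i j
  have := congrFun (h (Pi.single j 1)) i
  simpa [Matrix.mulVec_single] using this

lemma rank1_mulVec {V : Type*} [Fintype V] [DecidableEq V] (w : V) (v : V → ℝ) :
    (Matrix.vecMulVec (Pi.single w 1) (Pi.single w 1)).mulVec v = (v w) • (Pi.single w 1 : V → ℝ) := by
  funext i
  simp only [Matrix.mulVec, Matrix.vecMulVec_apply, dotProduct, Pi.smul_apply,
    smul_eq_mul]
  rw [Finset.sum_congr rfl (fun t _ => by ring_nf; rfl)]
  simp [Pi.single_apply, Finset.sum_ite_eq', mul_comm]
theorem stmt11 (n k : ℕ) (hk : 1 ≤ k) (hkn : 2 * k < n) (γ : ℝ) (hγ : 0 < γ)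
    (w1 w2 : JV n k) (hw : w1 ≠ w2)
    (P : Fin (k+1) → Matrix (JV n k) (JV n k) ℝ)
    (hP : ∀ ℓ, IsOrthProj (JA n k) (jphi n k ℓ) (P ℓ))
    (lam : ℝ) (hnot : ¬ IsEig ((-γ) • JA n k) lam)
    (v : JV n k → ℝ) (hvinv : v ∈ Hinv w1 w2) (hv0 : v ≠ 0)
    (hHv : (JH n k w1 w2 γ).mulVec v = lam • v) :
    1 + (∑ ℓ, P ℓ w1 w1 / (lam + γ * jphi n k ℓ))
      + (∑ ℓ, P ℓ w1 w2 / (lam + γ * jphi n k ℓ)) = 0 := by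
  classical
  -- v takes the same value on the two marked vertices
  have hvw : v w2 = v w1 := by
    obtain ⟨g, hgfix, hg12⟩ := johnson_exists_swap w1 w2
    have := hvinv g hgfix w1
    rw [hg12] at this
    exact this
  set c := v w1 with hc
  -- rewrite the eigen-equation
  have heq : (-γ) • ((JA n k).mulVec v) - lam • v
      = c • (Pi.single w1 1 : JV n k → ℝ) + c • (Pi.single w2 1 : JV n k → ℝ) := by
    have h1 : (JH n k w1 w2 γ).mulVec v
        = (-γ) • ((JA n k).mulVec v) - c • (Pi.single w1 1 : JV n k → ℝ)
          - c • (Pi.single w2 1 : JV n k → ℝ) := by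
      rw [JH, Matrix.sub_mulVec, Matrix.sub_mulVec, Matrix.smul_mulVec,
        rank1_mulVec, rank1_mulVec, hvw, ← hc]
    rw [h1] at hHv
    have := sub_eq_iff_eq_add.1 (sub_eq_iff_eq_add.1 hHv)
    rw [this]
    abel
  -- c ≠ 0
  have hc0 : c ≠ 0 := by
    intro h0
    apply hnot
    refine ⟨v, hv0, ?_⟩
    rw [Matrix.smul_mulVec]
    rw [h0] at heq
    simp only [zero_smul, add_zero] at heq
    linear_combination (norm := module) heq
  -- P ℓ commutes with JA
  have hsymA : (JA n k)ᵀ = JA n k := SimpleGraph.isSymm_adjMatrix _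
  have hPA : ∀ ℓ, (P ℓ) * JA n k = jphi n k ℓ • P ℓ := by
    intro ℓ
    have hAP : JA n k * P ℓ = jphi n k ℓ • P ℓ := by
      apply mat_ext_mulVec
      intro x
      rw [← Matrix.mulVec_mulVec, (hP ℓ).2.2.1 x, Matrix.smul_mulVec]
    have := congrArg Matrix.transpose hAP
    rwa [Matrix.transpose_mul, Matrix.transpose_smul, hsymA, (hP ℓ).1] at this
  -- the key component computation
  have key : ∀ ℓ, ((P ℓ).mulVec v) w1
      = -c * ((P ℓ w1 w1 + P ℓ w1 w2) / (lam + γ * jphi n k ℓ)) := by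
    intro ℓ
    have hPeq : ((-γ) * jphi n k ℓ - lam) • ((P ℓ).mulVec v)
        = c • ((P ℓ).mulVec (Pi.single w1 1)) + c • ((P ℓ).mulVec (Pi.single w2 1)) := by
      have := congrArg ((P ℓ).mulVec) heq
      rw [Matrix.mulVec_add, Matrix.mulVec_smul, Matrix.mulVec_smul, Matrix.mulVec_sub,
        Matrix.mulVec_smul, Matrix.mulVec_smul, Matrix.mulVec_mulVec, hPA ℓ,
        Matrix.smul_mulVec] at this
      rw [← this]
      match_scalars <;> ring
    have heval : ((-γ) * jphi n k ℓ - lam) * (((P ℓ).mulVec v) w1)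
        = c * (P ℓ w1 w1 + P ℓ w1 w2) := by
      have := congrFun hPeq w1
      simp only [Pi.add_apply, Pi.smul_apply, smul_eq_mul, Matrix.mulVec_single_one, Matrix.col_apply,
        mul_one] at this
      rw [this]
      ring
    by_cases hd : lam + γ * jphi n k ℓ = 0
    · have hPv0 : (P ℓ).mulVec v = 0 := by
        by_contra hne
        apply hnot
        refine ⟨(P ℓ).mulVec v, hne, ?_⟩
        rw [Matrix.smul_mulVec]
        have hAPv : (JA n k).mulVec ((P ℓ).mulVec v) = jphi n k ℓ • ((P ℓ).mulVec v) :=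
          (hP ℓ).2.2.1 v
        rw [hAPv]
        have : lam = -γ * jphi n k ℓ := by linarith
        rw [this]
        match_scalars <;> ring
      rw [hPv0, hd]
      simp
    · have hco : (-γ) * jphi n k ℓ - lam ≠ 0 := by
        intro h; apply hd; linarith
      rw [← mul_div_assoc, eq_div_iff hd]
      linear_combination -heval
  -- assemble
  have hcsum : c = ∑ ℓ, ((P ℓ).mulVec v) w1 := by
    have h := congrFun (sumP hk hkn P hP v) w1
    rw [Finset.sum_apply] at h
    rw [hc, ← h]
  rw [Finset.sum_congr rfl (fun ℓ _ => key ℓ)] at hcsum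
  rw [← Finset.mul_sum] at hcsum
  set S := ∑ ℓ, (P ℓ w1 w1 + P ℓ w1 w2) / (lam + γ * jphi n k ℓ) with hS
  have hsplit : (∑ ℓ, P ℓ w1 w1 / (lam + γ * jphi n k ℓ))
      + (∑ ℓ, P ℓ w1 w2 / (lam + γ * jphi n k ℓ)) = S := by
    rw [hS, ← Finset.sum_add_distrib]
    exact Finset.sum_congr rfl fun ℓ _ => (add_div _ _ _).symm
  have h1S : 1 + S = 0 := by
    have : c * (1 + S) = 0 := by
      linear_combination hcsum
    rcases mul_eq_zero.1 this with h | h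
    · exact absurd h hc0
    · exact h
  rw [add_assoc, hsplit, h1S]
end

section
/- Fix integers k ≥ 1 and 1 ≤ δ ≤ k. Then there exist a constant C > 0 and an integer n_0 such that for all n ≥ n_0 and all choices of k-subsets w1, w2 of {1,…,n} with |w1 ∩ w2| = k − δ, one has |S1'| ≤ C·n^{−(δ+1)} and |S2'| ≤ C·n^{−(δ+2)}. -/
open Matrix

open Polynomial Finset

noncomputable def phiR (n k ℓ : ℕ) : ℝ := ((k:ℝ) - ℓ) * ((n:ℝ) - k - ℓ) - ℓ

/-- inclusion matrix between k-sets and (k+1)-sets -/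
noncomputable def JW (n k : ℕ) : Matrix (JV n k) (JV n (k+1)) ℝ :=
  fun S T => if S.1 ⊆ T.1 then 1 else 0

/-- number of k-subsets of a fixed set -/
lemma card_subsets (n k : ℕ) (U : Finset (Fin n)) :
    (univ.filter (fun S : JV n k => S.1 ⊆ U)).card = U.card.choose k := by
  rw [← Finset.card_powersetCard k U]
  apply Finset.card_bij (fun S _ => S.1)
  · intro S hS
    simp only [mem_filter, mem_univ, true_and] at hS
    simp [Finset.mem_powersetCard, hS, S.2]
  · intro S1 h1 S2 h2 h
    exact Subtype.ext h
  · intro s hs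
    rw [Finset.mem_powersetCard] at hs
    exact ⟨⟨s, hs.2⟩, by simp [hs.1], rfl⟩

/-- number of m-subsets of [n] containing a fixed set U, when U.card ≤ m -/
lemma card_supersets (n m : ℕ) (U : Finset (Fin n)) (h : U.card ≤ m) :
    (univ.filter (fun T : JV n m => U ⊆ T.1)).card = (n - U.card).choose (m - U.card) := by
  have : (n - U.card) = (Finset.univ \ U : Finset (Fin n)).card := by
    rw [Finset.card_sdiff_of_subset (Finset.subset_univ U), Finset.card_univ, Fintype.card_fin]
  rw [this, ← Finset.card_powersetCard]
  apply Finset.card_bij (fun T _ => T.1 \ U)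
  · intro T hT
    simp only [mem_filter, mem_univ, true_and] at hT
    rw [Finset.mem_powersetCard]
    constructor
    · intro x hx
      simp only [Finset.mem_sdiff] at hx ⊢
      exact ⟨Finset.mem_univ x, hx.2⟩
    · rw [Finset.card_sdiff_of_subset hT, T.2]
  · intro T1 h1 T2 h2 hee
    simp only [mem_filter, mem_univ, true_and] at h1 h2
    apply Subtype.ext
    have e1 : T1.1 = (T1.1 \ U) ∪ U := by
      rw [Finset.sdiff_union_self_eq_union, Finset.union_eq_left.2 h1]
    have e2 : T2.1 = (T2.1 \ U) ∪ U := by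
      rw [Finset.sdiff_union_self_eq_union, Finset.union_eq_left.2 h2]
    rw [e1, e2, hee]
  · intro s hs
    rw [Finset.mem_powersetCard] at hs
    have hdisj : Disjoint s U := by
      rw [Finset.disjoint_left]
      intro x hx
      have := hs.1 hx
      simp only [Finset.mem_sdiff] at this
      exact this.2
    refine ⟨⟨s ∪ U, ?_⟩, ?_, ?_⟩
    · rw [Finset.card_union_of_disjoint hdisj, hs.2]
      omega
    · simp
    · simp only
      rw [Finset.union_sdiff_cancel_right ?_]
      exact hdisj

lemma JA_apply (n k : ℕ) (a b : JV n k) :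
    JA n k a b = if (a.1 ∩ b.1).card = k - 1 ∧ a ≠ b then 1 else 0 := by
  rw [JA, SimpleGraph.adjMatrix_apply]; rfl

lemma F1 (n k : ℕ) : (JW n k)ᵀ * JW n k = JA n (k+1) + ((k:ℝ)+1) • 1 := by
  ext T1 T2
  rw [Matrix.mul_apply]
  have hsum : ∑ S : JV n k, (JW n k)ᵀ T1 S * JW n k S T2
      = ∑ S : JV n k, (if S.1 ⊆ T1.1 ∩ T2.1 then (1:ℝ) else 0) := by
    apply Finset.sum_congr rfl
    intro S _
    simp only [transpose_apply, JW, Finset.subset_inter_iff]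
    by_cases h1 : S.1 ⊆ T1.1 <;> by_cases h2 : S.1 ⊆ T2.1 <;> simp [h1, h2]
  rw [hsum, Finset.sum_boole, card_subsets n k (T1.1 ∩ T2.1)]
  simp only [Matrix.add_apply, Matrix.smul_apply, Matrix.one_apply, JA_apply, smul_eq_mul]
  by_cases he : T1 = T2
  · subst he
    simp only [Finset.inter_self, T1.2, Nat.choose_succ_self_right, if_pos rfl, ne_eq,
      not_true_eq_false, and_false, if_false]
    push_cast; ring
  · have hlt : (T1.1 ∩ T2.1).card < k + 1 := by
      rcases lt_or_eq_of_le (le_trans (Finset.card_le_card (Finset.inter_subset_left)) (le_of_eq T1.2)) with h | h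
      · exact h
      · exfalso
        apply he
        apply Subtype.ext
        have : T1.1 ∩ T2.1 = T1.1 := Finset.eq_of_subset_of_card_le Finset.inter_subset_left (by rw [h, T1.2])
        have h2 : T1.1 ⊆ T2.1 := by rw [← this]; exact Finset.inter_subset_right
        exact Finset.eq_of_subset_of_card_le h2 (by rw [T1.2, T2.2])
    rw [if_neg he]
    by_cases hc : (T1.1 ∩ T2.1).card = k
    · rw [hc, Nat.choose_self, if_pos ⟨by omega, he⟩]
      norm_num
    · rw [Nat.choose_eq_zero_of_lt (by omega), if_neg (by push_neg; intro h; omega)]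
      norm_num

lemma F2 (n k : ℕ) (hkn : k + 1 ≤ n) :
    JW n k * (JW n k)ᵀ = JA n k + ((n:ℝ) - k) • 1 := by
  ext S1 S2
  rw [Matrix.mul_apply]
  have hsum : ∑ T : JV n (k+1), JW n k S1 T * (JW n k)ᵀ T S2
      = ∑ T : JV n (k+1), (if S1.1 ∪ S2.1 ⊆ T.1 then (1:ℝ) else 0) := by
    apply Finset.sum_congr rfl
    intro T _
    simp only [transpose_apply, JW, Finset.union_subset_iff]
    by_cases h1 : S1.1 ⊆ T.1 <;> by_cases h2 : S2.1 ⊆ T.1 <;> simp [h1, h2]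
  rw [hsum, Finset.sum_boole]
  simp only [Matrix.add_apply, Matrix.smul_apply, Matrix.one_apply, JA_apply, smul_eq_mul]
  have hcard : (S1.1 ∪ S2.1).card + (S1.1 ∩ S2.1).card = 2 * k := by
    rw [Finset.card_union_add_card_inter, S1.2, S2.2]; ring
  by_cases he : S1 = S2
  · subst he
    rw [Finset.union_self, card_supersets n (k+1) S1.1 (by rw [S1.2]; omega)]
    rw [S1.2]
    have : (n - k).choose (k + 1 - k) = n - k := by
      have : k + 1 - k = 1 := by omega
      rw [this, Nat.choose_one_right]
    rw [this, if_pos rfl, if_neg (by simp)]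
    push_cast [Nat.cast_sub (by omega : k ≤ n)]
    ring
  · have hne : S1.1 ≠ S2.1 := fun h => he (Subtype.ext h)
    have hu : k + 1 ≤ (S1.1 ∪ S2.1).card := by
      by_contra h
      push_neg at h
      have e1 : S1.1 = S1.1 ∪ S2.1 :=
        Finset.eq_of_subset_of_card_le Finset.subset_union_left (by rw [S1.2]; omega)
      have e2 : S2.1 = S1.1 ∪ S2.1 :=
        Finset.eq_of_subset_of_card_le Finset.subset_union_right (by rw [S2.2]; omega)
      exact hne (e1.trans e2.symm)
    rw [if_neg he]
    by_cases hc : (S1.1 ∪ S2.1).card = k + 1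
    · rw [card_supersets n (k+1) _ (le_of_eq hc), hc]
      simp only [Nat.sub_self, Nat.choose_zero_right]
      rw [if_pos ⟨by omega, he⟩]
      norm_num
    · have hgt : k + 2 ≤ (S1.1 ∪ S2.1).card := by omega
      have hzero : (univ.filter (fun T : JV n (k+1) => S1.1 ∪ S2.1 ⊆ T.1)).card = 0 := by
        rw [Finset.card_eq_zero, Finset.filter_eq_empty_iff]
        intro T _ hsub
        have := Finset.card_le_card hsub
        rw [T.2] at this
        omega
      rw [hzero]
      have hk1 : 1 ≤ k := by
        by_contra h
        push_neg at h
        interval_cases k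
        apply hne
        rw [Finset.card_eq_zero.1 S1.2, Finset.card_eq_zero.1 S2.2]
      rw [if_neg (by push_neg; intro h; omega)]
      norm_num

section algebra
variable {α : Type*} [Fintype α] [DecidableEq α]

lemma aeval_X_sub_C (A : Matrix α α ℝ) (c : ℝ) :
    aeval A (X - C c) = A - c • 1 := by
  rw [map_sub, aeval_X, aeval_C, Algebra.algebraMap_eq_smul_one]

/-- shift lemma -/
lemma aeval_prod_shift {ι : Type*} (s : Finset ι) (c : ι → ℝ) (r : ℝ) (A : Matrix α α ℝ) :
    aeval A (∏ j ∈ s, (X - C (c j))) = aeval (A + r • 1) (∏ j ∈ s, (X - C (c j + r))) := by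
  classical
  induction s using Finset.induction_on with
  | empty => simp
  | insert a s hnotmem ih =>
    rw [Finset.prod_insert hnotmem, Finset.prod_insert hnotmem, _root_.map_mul, _root_.map_mul,
      aeval_X_sub_C, aeval_X_sub_C, ih]
    congr 1
    rw [add_smul]
    abel

/-- swap lemma -/
lemma aeval_swap {β : Type*} [Fintype β] [DecidableEq β]
    (U : Matrix α β ℝ) (V : Matrix β α ℝ) (p : ℝ[X]) :
    aeval (V * U) p * V = V * aeval (U * V) p := by
  induction p using Polynomial.induction_on' with
  | add p q hp hq => rw [map_add, map_add, Matrix.add_mul, Matrix.mul_add, hp, hq]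
  | monomial m c =>
    have key : ∀ m : ℕ, (V * U) ^ m * V = V * (U * V) ^ m := by
      intro m
      induction m with
      | zero => simp
      | succ m ih =>
        rw [pow_succ, pow_succ, Matrix.mul_assoc ((V*U)^m) (V*U) V, Matrix.mul_assoc V U V,
          ← Matrix.mul_assoc ((V*U)^m) V (U*V), ih, Matrix.mul_assoc V ((U*V)^m) (U*V)]
    rw [aeval_monomial, aeval_monomial, Algebra.algebraMap_eq_smul_one,
      Algebra.algebraMap_eq_smul_one, smul_mul_assoc, one_mul, smul_mul_assoc, one_mul,
      Matrix.smul_mul, key, Matrix.mul_smul]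
lemma matrix_ext_mulVec {M N : Matrix α α ℝ} (h : ∀ x, M.mulVec x = N.mulVec x) : M = N := by
  ext i j
  have := congrFun (h (Pi.single j 1)) i
  simpa using this

lemma pow_mulVec_eig {A : Matrix α α ℝ} {μ : ℝ} {x : α → ℝ} (h : A.mulVec x = μ • x) :
    ∀ m : ℕ, (A ^ m).mulVec x = μ ^ m • x := by
  intro m
  induction m with
  | zero => simp
  | succ m ih =>
    rw [pow_succ, pow_succ, ← Matrix.mulVec_mulVec, h, Matrix.mulVec_smul, ih, smul_comm,
      ← smul_assoc, smul_eq_mul]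

lemma aeval_mulVec_eig {A : Matrix α α ℝ} {μ : ℝ} {x : α → ℝ} (h : A.mulVec x = μ • x)
    (p : ℝ[X]) : (aeval A p).mulVec x = p.eval μ • x := by
  induction p using Polynomial.induction_on' with
  | add p q hp hq => rw [map_add, Matrix.add_mulVec, hp, hq, eval_add, add_smul]
  | monomial m c =>
    rw [aeval_monomial, Algebra.algebraMap_eq_smul_one, smul_mul_assoc, one_mul,
      Matrix.smul_mulVec, pow_mulVec_eig h, eval_monomial, ← smul_assoc, smul_eq_mul]

lemma aeval_transpose {A : Matrix α α ℝ} (hA : Aᵀ = A) (p : ℝ[X]) :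
    (aeval A p)ᵀ = aeval A p := by
  induction p using Polynomial.induction_on' with
  | add p q hp hq => rw [map_add, Matrix.transpose_add, hp, hq]
  | monomial m c =>
    rw [aeval_monomial, Algebra.algebraMap_eq_smul_one, smul_mul_assoc, one_mul,
      Matrix.transpose_smul, Matrix.transpose_pow, hA]
end algebra

lemma JA_zero (n : ℕ) : JA n 0 = 0 := by
  ext a b
  rw [JA_apply]
  have : a = b := Subtype.ext (by rw [Finset.card_eq_zero.1 a.2, Finset.card_eq_zero.1 b.2])
  simp [this]

theorem JA_minpoly (n : ℕ) : ∀ k : ℕ, k ≤ n →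
    aeval (JA n k) (∏ ℓ ∈ Finset.range (k+1), (X - C (phiR n k ℓ))) = 0 := by
  intro k
  induction k with
  | zero =>
    intro _
    have : phiR n 0 0 = 0 := by simp [phiR]
    rw [Finset.prod_range_one, this, aeval_X_sub_C, JA_zero]
    simp
  | succ k ih =>
    intro hkn
    have hshift := aeval_prod_shift (Finset.range (k+2)) (fun ℓ => phiR n (k+1) ℓ)
      ((k:ℝ)+1) (JA n (k+1))
    rw [hshift, ← F1 n k]
    have hq : (∏ j ∈ Finset.range (k+2), (X - C (phiR n (k+1) j + ((k:ℝ)+1))))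
        = (∏ j ∈ Finset.range (k+1), (X - C (phiR n (k+1) j + ((k:ℝ)+1)))) * X := by
      rw [Finset.prod_range_succ]
      congr 1
      have : phiR n (k+1) (k+1) + ((k:ℝ)+1) = 0 := by
        simp only [phiR]
        push_cast
        ring
      rw [this, map_zero, sub_zero]
    rw [hq, _root_.map_mul, aeval_X, ← Matrix.mul_assoc, aeval_swap (JW n k) ((JW n k)ᵀ),
      F2 n k hkn]
    have hs : aeval (JA n k + ((n:ℝ) - k) • 1)
        (∏ j ∈ Finset.range (k+1), (X - C (phiR n (k+1) j + ((k:ℝ)+1)))) = 0 := by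
      have h2 := aeval_prod_shift (Finset.range (k+1))
        (fun j => phiR n (k+1) j + ((k:ℝ)+1) - ((n:ℝ) - k)) ((n:ℝ) - k) (JA n k)
      simp only [sub_add_cancel] at h2
      rw [← h2]
      have hcong : (∏ j ∈ Finset.range (k+1),
          (X - C (phiR n (k+1) j + ((k:ℝ)+1) - ((n:ℝ) - k))))
          = ∏ j ∈ Finset.range (k+1), (X - C (phiR n k j)) := by
        apply Finset.prod_congr rfl
        intro j _
        congr 1
        simp only [phiR]
        push_cast
        ring
      rw [hcong]
      exact ih (by omega)
    rw [hs, Matrix.mul_zero, Matrix.zero_mul]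

noncomputable def qpoly (n k ℓ : ℕ) : ℝ[X] :=
  ∏ j ∈ (Finset.range (k+1)).erase ℓ, (X - C (phiR n k j))

noncomputable def dval (n k ℓ : ℕ) : ℝ :=
  ∏ j ∈ (Finset.range (k+1)).erase ℓ, (phiR n k ℓ - phiR n k j)

lemma JA_symm (n k : ℕ) : (JA n k)ᵀ = JA n k := SimpleGraph.transpose_adjMatrix _

theorem proj_eq (n k : ℕ) (hkn : k ≤ n) (ℓ : ℕ) (hℓ : ℓ ∈ Finset.range (k+1))
    (P : Matrix (JV n k) (JV n k) ℝ) (hP : IsOrthProj (JA n k) (phiR n k ℓ) P)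
    (hd : dval n k ℓ ≠ 0) :
    P = (dval n k ℓ)⁻¹ • aeval (JA n k) (qpoly n k ℓ) := by
  set A := JA n k with hA
  set Q := aeval A (qpoly n k ℓ) with hQ
  -- (a) A * Q = φℓ • Q
  have hfull : (X - C (phiR n k ℓ)) * qpoly n k ℓ
      = ∏ j ∈ Finset.range (k+1), (X - C (phiR n k j)) := by
    rw [qpoly]
    exact Finset.mul_prod_erase _ (fun j => X - C (phiR n k j)) hℓ
  have haQ : A * Q - phiR n k ℓ • Q = 0 := by
    have := congrArg (aeval A) hfull
    rw [_root_.map_mul, JA_minpoly n k hkn, map_sub, aeval_X, aeval_C,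
      Algebra.algebraMap_eq_smul_one, Matrix.sub_mul, Matrix.smul_mul, Matrix.one_mul] at this
    exact this
  have haQ' : A * Q = phiR n k ℓ • Q := by
    rw [← sub_eq_zero]; exact haQ
  -- (b) eval
  have heval : (qpoly n k ℓ).eval (phiR n k ℓ) = dval n k ℓ := by
    rw [qpoly, eval_prod, dval]
    apply Finset.prod_congr rfl
    intro j _
    simp
  -- (c) P * Q = Q
  have hPQ : P * Q = Q := by
    apply matrix_ext_mulVec
    intro x
    rw [← Matrix.mulVec_mulVec]
    apply hP.2.2.2
    rw [Matrix.mulVec_mulVec, haQ', Matrix.smul_mulVec]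
  -- (d) Q * P = d • P
  have hQP : Q * P = dval n k ℓ • P := by
    apply matrix_ext_mulVec
    intro x
    rw [← Matrix.mulVec_mulVec, aeval_mulVec_eig (hP.2.2.1 x) (qpoly n k ℓ), heval,
      Matrix.smul_mulVec]
  -- (e) transpose
  have hQsymm : Qᵀ = Q := aeval_transpose (JA_symm n k) _
  have : Q = dval n k ℓ • P := by
    calc Q = Qᵀ := hQsymm.symm
    _ = (P * Q)ᵀ := by rw [hPQ]
    _ = Qᵀ * Pᵀ := Matrix.transpose_mul _ _
    _ = Q * P := by rw [hQsymm, hP.1]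
    _ = dval n k ℓ • P := hQP
  rw [this, ← smul_assoc, smul_eq_mul, inv_mul_cancel₀ hd, one_smul]

lemma JA_pow_nonneg (n k : ℕ) (m : ℕ) (a b : JV n k) : 0 ≤ ((JA n k)^m) a b := by
  induction m generalizing a b with
  | zero =>
    rw [pow_zero]
    by_cases h : a = b <;> simp [Matrix.one_apply, h]
  | succ m ih =>
    rw [pow_succ, Matrix.mul_apply]
    apply Finset.sum_nonneg
    intro c _
    exact mul_nonneg (ih a c) (by simp [JA]; positivity)

section nbrs
variable {n k : ℕ} (a b : JV n k)

lemma nbr_sdiff {c : JV n k} (hk : 1 ≤ k) (h : (JohnsonGraph n k).Adj c b) :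
    (b.1 \ c.1).card = 1 ∧ (c.1 \ b.1).card = 1 := by
  have h1 : (c.1 ∩ b.1).card = k - 1 := h.1
  have h2 := Finset.card_inter_add_card_sdiff c.1 b.1
  have h3 := Finset.card_inter_add_card_sdiff b.1 c.1
  rw [Finset.inter_comm] at h3
  rw [c.2] at h2
  rw [b.2] at h3
  omega

lemma nbr_inter_le {c : JV n k} (hk : 1 ≤ k) (h : (JohnsonGraph n k).Adj c b) :
    (a.1 ∩ c.1).card ≤ (a.1 ∩ b.1).card + 1 := by
  have hsub : a.1 ∩ c.1 ⊆ (a.1 ∩ b.1) ∪ (c.1 \ b.1) := by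
    intro x hx
    rw [Finset.mem_inter] at hx
    by_cases hb : x ∈ b.1
    · exact Finset.mem_union_left _ (Finset.mem_inter.2 ⟨hx.1, hb⟩)
    · exact Finset.mem_union_right _ (Finset.mem_sdiff.2 ⟨hx.2, hb⟩)
  calc (a.1 ∩ c.1).card ≤ ((a.1 ∩ b.1) ∪ (c.1 \ b.1)).card := Finset.card_le_card hsub
  _ ≤ (a.1 ∩ b.1).card + (c.1 \ b.1).card := Finset.card_union_le _ _
  _ ≤ (a.1 ∩ b.1).card + 1 := by rw [(nbr_sdiff b hk h).2]

lemma nbr_recover {c : JV n k} (hk : 1 ≤ k) (h : (JohnsonGraph n k).Adj c b) :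
    c.1 = (c.1 \ b.1) ∪ (b.1 \ (b.1 \ c.1)) := by
  rw [Finset.sdiff_sdiff_self_left, Finset.inter_comm]
  exact (Finset.sdiff_union_inter c.1 b.1).symm

lemma nbr_card_le (hk : 1 ≤ k) :
    (univ.filter (fun c : JV n k => (JohnsonGraph n k).Adj c b)).card ≤ k * n := by
  have := Finset.card_le_card_of_injOn
    (fun c : JV n k => (b.1 \ c.1, c.1 \ b.1))
    (t := (b.1.image fun x => ({x} : Finset (Fin n))) ×ˢ
      ((univ : Finset (Fin n)).image fun y => ({y} : Finset (Fin n))))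
    (s := univ.filter (fun c : JV n k => (JohnsonGraph n k).Adj c b))
    ?_ ?_
  · refine le_trans this ?_
    rw [Finset.card_product]
    have h1 := Finset.card_image_le (s := b.1) (f := fun x => ({x} : Finset (Fin n)))
    have h2 := Finset.card_image_le (s := (univ : Finset (Fin n)))
      (f := fun y => ({y} : Finset (Fin n)))
    rw [b.2] at h1
    rw [Finset.card_univ, Fintype.card_fin] at h2
    exact Nat.mul_le_mul h1 h2
  · intro c hc
    rw [Finset.mem_coe, Finset.mem_filter] at hc
    obtain ⟨h1, h2⟩ := nbr_sdiff b hk hc.2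
    obtain ⟨x, hx⟩ := Finset.card_eq_one.1 h1
    obtain ⟨y, hy⟩ := Finset.card_eq_one.1 h2
    have hxb : x ∈ b.1 := by
      have : x ∈ b.1 \ c.1 := by rw [hx]; exact Finset.mem_singleton_self x
      exact (Finset.mem_sdiff.1 this).1
    refine Finset.mem_product.2 ⟨?_, ?_⟩
    · show b.1 \ c.1 ∈ _
      rw [hx]
      exact Finset.mem_image_of_mem _ hxb
    · show c.1 \ b.1 ∈ _
      rw [hy]
      exact Finset.mem_image_of_mem _ (Finset.mem_univ y)
  · intro c1 hc1 c2 hc2 heq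
    simp only [Finset.coe_filter, Set.mem_setOf_eq, Finset.mem_univ, true_and] at hc1 hc2
    simp only [Prod.mk.injEq] at heq
    apply Subtype.ext
    rw [nbr_recover b hk hc1, nbr_recover b hk hc2, heq.1, heq.2]

lemma nbr_card_le2 (hk : 1 ≤ k) :
    (univ.filter (fun c : JV n k => (JohnsonGraph n k).Adj c b ∧
      (a.1 ∩ b.1).card + 1 ≤ (a.1 ∩ c.1).card)).card ≤ k * k := by
  have := Finset.card_le_card_of_injOn
    (fun c : JV n k => (b.1 \ c.1, c.1 \ b.1))
    (t := (b.1.image fun x => ({x} : Finset (Fin n))) ×ˢ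
      (a.1.image fun y => ({y} : Finset (Fin n))))
    (s := univ.filter (fun c : JV n k => (JohnsonGraph n k).Adj c b ∧
      (a.1 ∩ b.1).card + 1 ≤ (a.1 ∩ c.1).card)) ?_ ?_
  · refine le_trans this ?_
    rw [Finset.card_product]
    have h1 := Finset.card_image_le (s := b.1) (f := fun x => ({x} : Finset (Fin n)))
    have h2 := Finset.card_image_le (s := a.1) (f := fun y => ({y} : Finset (Fin n)))
    rw [b.2] at h1
    rw [a.2] at h2
    exact Nat.mul_le_mul h1 h2
  · intro c hc
    rw [Finset.mem_coe, Finset.mem_filter] at hc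
    obtain ⟨_, hadj, hcard⟩ := hc
    obtain ⟨h1, h2⟩ := nbr_sdiff b hk hadj
    obtain ⟨x, hx⟩ := Finset.card_eq_one.1 h1
    obtain ⟨y, hy⟩ := Finset.card_eq_one.1 h2
    have hxb : x ∈ b.1 := by
      have : x ∈ b.1 \ c.1 := by rw [hx]; exact Finset.mem_singleton_self x
      exact (Finset.mem_sdiff.1 this).1
    have hya : y ∈ a.1 := by
      by_contra hya
      have hsub : a.1 ∩ c.1 ⊆ a.1 ∩ b.1 := by
        intro z hz
        rw [Finset.mem_inter] at hz
        rw [Finset.mem_inter]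
        refine ⟨hz.1, ?_⟩
        by_contra hzb
        have : z ∈ c.1 \ b.1 := Finset.mem_sdiff.2 ⟨hz.2, hzb⟩
        rw [hy, Finset.mem_singleton] at this
        exact hya (this ▸ hz.1)
      have := Finset.card_le_card hsub
      omega
    refine Finset.mem_product.2 ⟨?_, ?_⟩
    · show b.1 \ c.1 ∈ _
      rw [hx]
      exact Finset.mem_image_of_mem _ hxb
    · show c.1 \ b.1 ∈ _
      rw [hy]
      exact Finset.mem_image_of_mem _ hya
  · intro c1 hc1 c2 hc2 heq
    simp only [Finset.coe_filter, Set.mem_setOf_eq, Finset.mem_univ, true_and] at hc1 hc2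
    simp only [Prod.mk.injEq] at heq
    apply Subtype.ext
    rw [nbr_recover b hk hc1.1, nbr_recover b hk hc2.1, heq.1, heq.2]

end nbrs

lemma JA_entry (n k : ℕ) (c b : JV n k) :
    JA n k c b = if (JohnsonGraph n k).Adj c b then 1 else 0 := by
  simp [JA]

lemma walk_bound (n k : ℕ) (hk : 1 ≤ k) (hn : 1 ≤ n) :
    ∀ m : ℕ, ∀ a b : JV n k, ((JA n k)^m) a b ≤
      ((k:ℝ)^2 + k + 1)^m * (n:ℝ)^((m:ℤ) + (a.1 ∩ b.1).card - k) := by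
  have hK1 : (1:ℝ) ≤ (k:ℝ)^2 + k + 1 := by
    have h0 : (0:ℝ) ≤ (k:ℝ) := Nat.cast_nonneg k
    nlinarith
  have hn0 : (0:ℝ) < n := by exact_mod_cast hn
  have hn1 : (1:ℝ) ≤ n := by exact_mod_cast hn
  intro m
  induction m with
  | zero =>
    intro a b
    rw [pow_zero, Matrix.one_apply]
    by_cases h : a = b
    · subst h
      rw [if_pos rfl, Finset.inter_self, a.2]
      simp
    · rw [if_neg h, pow_zero, one_mul]
      positivity
  | succ m ih =>
    intro a b
    set K := (k:ℝ)^2 + k + 1 with hKdef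
    set t := (a.1 ∩ b.1).card with ht
    rw [pow_succ, Matrix.mul_apply]
    have hterm : ∀ c : JV n k, ((JA n k)^m) a c * JA n k c b
        = if (JohnsonGraph n k).Adj c b then ((JA n k)^m) a c else 0 := by
      intro c
      rw [JA_entry]
      by_cases h : (JohnsonGraph n k).Adj c b <;> simp [h]
    rw [Finset.sum_congr rfl (fun c _ => hterm c), ← Finset.sum_filter]
    set N := univ.filter (fun c : JV n k => (JohnsonGraph n k).Adj c b) with hN
    rw [← Finset.sum_filter_add_sum_filter_not N (fun c => t + 1 ≤ (a.1 ∩ c.1).card)]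
    set E := (n:ℝ)^(((m+1:ℕ):ℤ) + t - k) with hE
    have hE0 : (0:ℝ) ≤ E := by positivity
    have hKm0 : (0:ℝ) ≤ K^m := by positivity
    have e1 : (n:ℝ)^((m:ℤ) + ((t:ℤ)+1) - k) = E := by
      rw [hE]; congr 1; push_cast; ring
    have e2 : (n:ℝ)^((m:ℤ) + t - k) = E / n := by
      rw [eq_div_iff (ne_of_gt hn0), hE, ← zpow_add_one₀ (ne_of_gt hn0)]
      congr 1; push_cast; ring
    have hb1 : ∑ c ∈ N.filter (fun c => t + 1 ≤ (a.1 ∩ c.1).card), ((JA n k)^m) a c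
        ≤ ((k:ℝ) * k) * (K^m * E) := by
      refine le_trans (Finset.sum_le_card_nsmul _ _ (K^m * E) ?_) ?_
      · intro c hc
        rw [Finset.mem_filter, hN, Finset.mem_filter] at hc
        refine (ih a c).trans ?_
        rw [← e1]
        apply mul_le_mul_of_nonneg_left _ hKm0
        apply zpow_le_zpow_right₀ hn1
        have := nbr_inter_le a b hk hc.1.2
        omega
      · rw [nsmul_eq_mul]
        apply mul_le_mul_of_nonneg_right _ (by positivity)
        have hcard : (N.filter (fun c => t + 1 ≤ (a.1 ∩ c.1).card)).card ≤ k * k := by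
          rw [hN, Finset.filter_filter]
          exact nbr_card_le2 a b hk
        calc ((N.filter (fun c => t + 1 ≤ (a.1 ∩ c.1).card)).card : ℝ)
            ≤ ((k * k : ℕ) : ℝ) := by exact_mod_cast hcard
        _ = (k:ℝ) * k := by push_cast; ring
    have hb2 : ∑ c ∈ N.filter (fun c => ¬(t + 1 ≤ (a.1 ∩ c.1).card)), ((JA n k)^m) a c
        ≤ ((k:ℝ) * n) * (K^m * (E / n)) := by
      refine le_trans (Finset.sum_le_card_nsmul _ _ (K^m * (E/n)) ?_) ?_
      · intro c hc
        rw [Finset.mem_filter] at hc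
        refine (ih a c).trans ?_
        rw [← e2]
        apply mul_le_mul_of_nonneg_left _ hKm0
        apply zpow_le_zpow_right₀ hn1
        have := hc.2
        omega
      · rw [nsmul_eq_mul]
        apply mul_le_mul_of_nonneg_right _ (by positivity)
        have hcard : (N.filter (fun c => ¬(t + 1 ≤ (a.1 ∩ c.1).card))).card ≤ k * n :=
          le_trans (Finset.card_filter_le _ _) (nbr_card_le b hk)
        calc ((N.filter (fun c => ¬(t + 1 ≤ (a.1 ∩ c.1).card))).card : ℝ)
            ≤ ((k * n : ℕ) : ℝ) := by exact_mod_cast hcard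
        _ = (k:ℝ) * n := by push_cast; ring
    refine le_trans (add_le_add hb1 hb2) ?_
    have hsimp : ((k:ℝ) * k) * (K^m * E) + ((k:ℝ) * n) * (K^m * (E / n))
        = ((k:ℝ)^2 + k) * (K^m * E) := by
      field_simp
    rw [hsimp]
    have hfin : ((k:ℝ)^2 + k) * (K^m * E) ≤ K * (K^m * E) :=
      mul_le_mul_of_nonneg_right (by rw [hKdef]; linarith) (by positivity)
    refine hfin.trans (le_of_eq ?_)
    rw [pow_succ]
    ring

lemma coeff_prod_bound {ι : Type*} [DecidableEq ι] (B : ℝ) (hB : 1 ≤ B) :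
    ∀ (s : Finset ι) (c : ι → ℝ), (∀ j ∈ s, |c j| ≤ B) → ∀ m : ℕ,
      |(∏ j ∈ s, (X - C (c j))).coeff m| ≤ 2^s.card * B^((s.card:ℤ) - m) := by
  have hB0 : (0:ℝ) < B := lt_of_lt_of_le one_pos hB
  intro s
  induction s using Finset.induction_on with
  | empty =>
    intro c _ m
    simp only [Finset.prod_empty, Finset.card_empty, pow_zero, one_mul, Nat.cast_zero, zero_sub]
    rcases Nat.eq_zero_or_pos m with h | h
    · subst h
      simp only [coeff_one, if_pos rfl]
      norm_num
    · rw [Polynomial.coeff_one, if_neg (by omega)]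
      simp only [abs_zero]
      positivity
  | insert a s hnotmem ih =>
    intro c hc m
    have hca : |c a| ≤ B := hc a (Finset.mem_insert_self a s)
    have ihc : ∀ j ∈ s, |c j| ≤ B := fun j hj => hc j (Finset.mem_insert_of_mem hj)
    set p := ∏ j ∈ s, (X - C (c j)) with hp
    have hexp : ∏ j ∈ insert a s, (X - C (c j)) = X * p - C (c a) * p := by
      rw [Finset.prod_insert hnotmem, sub_mul]
    rw [hexp, Finset.card_insert_of_notMem hnotmem]
    set t := s.card with htdef
    have hBz : (B:ℝ) ≠ 0 := ne_of_gt hB0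
    rcases Nat.eq_zero_or_pos m with h | h
    · subst h
      rw [coeff_sub, coeff_C_mul, Polynomial.coeff_X_mul_zero, zero_sub, abs_neg, abs_mul]
      have h1 := ih c ihc 0
      calc |c a| * |p.coeff 0| ≤ B * (2^t * B^((t:ℤ) - 0)) :=
        mul_le_mul hca h1 (abs_nonneg _) (le_of_lt hB0)
      _ = 2^t * B^((t:ℤ)+1) := by
        rw [zpow_add_one₀ hBz]
        push_cast
        ring
      _ ≤ 2^(t+1) * B^(((t:ℕ)+1:ℤ) - 0) := by
        have : (((t:ℕ)+1:ℤ) - 0) = (t:ℤ)+1 := by ring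
        rw [this, pow_succ]
        apply mul_le_mul_of_nonneg_right _ (by positivity)
        nlinarith [pow_pos (show (0:ℝ) < 2 by norm_num) t]
      _ = 2^(t+1) * B^(((t+1:ℕ):ℤ) - (0:ℕ)) := by norm_num
    · obtain ⟨m', rfl⟩ : ∃ m', m = m' + 1 := ⟨m - 1, by omega⟩
      rw [coeff_sub, coeff_C_mul, Polynomial.coeff_X_mul]
      have h1 := ih c ihc m'
      have h2 := ih c ihc (m' + 1)
      calc |p.coeff m' - c a * p.coeff (m'+1)|
          ≤ |p.coeff m'| + |c a| * |p.coeff (m'+1)| := by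
            refine (abs_sub _ _).trans ?_
            rw [abs_mul]
      _ ≤ 2^t * B^((t:ℤ) - m') + B * (2^t * B^((t:ℤ) - (m'+1))) := by
            apply add_le_add h1
            exact mul_le_mul hca h2 (abs_nonneg _) (le_of_lt hB0)
      _ = 2^(t+1) * B^((t:ℤ) - m') := by
            have : B * (2^t * B^((t:ℤ) - (m'+1))) = 2^t * B^((t:ℤ) - m') := by
              rw [show ((t:ℤ) - m') = ((t:ℤ) - (m'+1)) + 1 by ring, zpow_add_one₀ hBz]
              push_cast
              ring
            rw [this, pow_succ]
            ring
      _ = 2^(t+1) * B^(((t+1:ℕ):ℤ) - ((m'+1:ℕ):ℤ)) := by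
            congr 2
            push_cast
            ring

section main
variable (n k : ℕ)

lemma gap_formula (j ℓ : ℕ) :
    phiR n k ℓ - phiR n k j = ((j:ℝ) - ℓ) * ((n:ℝ) - j - ℓ + 1) := by
  simp only [phiR]
  ring

lemma cast_ge_one_of_ne {j ℓ : ℕ} (h : j ≠ ℓ) : (1:ℝ) ≤ |(j:ℝ) - ℓ| := by
  rcases lt_or_gt_of_ne h with h' | h'
  · rw [abs_sub_comm]
    rw [le_abs]
    left
    have : (j:ℝ) + 1 ≤ ℓ := by exact_mod_cast h'
    linarith
  · rw [le_abs]
    left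
    have : (ℓ:ℝ) + 1 ≤ j := by exact_mod_cast h'
    linarith

lemma gap_lower (hn : 4*k ≤ n) {j ℓ : ℕ} (hj : j ≤ k) (hℓ : ℓ ≤ k) (hne : j ≠ ℓ) :
    (n:ℝ)/2 ≤ |phiR n k ℓ - phiR n k j| := by
  rw [gap_formula, abs_mul]
  have h2 : (n:ℝ)/2 ≤ |(n:ℝ) - j - ℓ + 1| := by
    rw [le_abs]
    left
    have hj' : (j:ℝ) ≤ k := by exact_mod_cast hj
    have hℓ' : (ℓ:ℝ) ≤ k := by exact_mod_cast hℓ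
    have hn' : 4*(k:ℝ) ≤ n := by exact_mod_cast hn
    linarith
  calc (n:ℝ)/2 ≤ |(n:ℝ) - j - ℓ + 1| := h2
  _ = 1 * |(n:ℝ) - j - ℓ + 1| := (one_mul _).symm
  _ ≤ |(j:ℝ) - ℓ| * |(n:ℝ) - j - ℓ + 1| :=
      mul_le_mul_of_nonneg_right (cast_ge_one_of_ne hne) (abs_nonneg _)

lemma dval_lower (hn : 4*k ≤ n) (hn1 : 1 ≤ n) {ℓ : ℕ} (hℓ : ℓ ≤ k) :
    ((n:ℝ)/2)^k ≤ |dval n k ℓ| := by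
  have hmem : ℓ ∈ Finset.range (k+1) := Finset.mem_range.2 (by omega)
  have hcard : ((Finset.range (k+1)).erase ℓ).card = k := by
    rw [Finset.card_erase_of_mem hmem, Finset.card_range]
    omega
  have hconst : ((n:ℝ)/2)^k = ∏ _j ∈ (Finset.range (k+1)).erase ℓ, ((n:ℝ)/2) := by
    rw [Finset.prod_const, hcard]
  rw [dval, Finset.abs_prod, hconst]
  apply Finset.prod_le_prod
  · intro j _
    positivity
  · intro j hj
    have hjr := Finset.mem_of_mem_erase hj
    rw [Finset.mem_range] at hjr
    exact gap_lower n k hn (by omega) hℓ (Finset.ne_of_mem_erase hj)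

lemma phi0_gap (hn : 4*k ≤ n) (hk : 1 ≤ k) {ℓ : ℕ} (h1 : 1 ≤ ℓ) (hℓ : ℓ ≤ k) :
    (n:ℝ)/2 ≤ phiR n k 0 - phiR n k ℓ := by
  rw [gap_formula]
  have h1' : (1:ℝ) ≤ ℓ := by exact_mod_cast h1
  have hℓ' : (ℓ:ℝ) ≤ k := by exact_mod_cast hℓ
  have hn' : 4*(k:ℝ) ≤ n := by exact_mod_cast hn
  have hk' : (1:ℝ) ≤ k := by exact_mod_cast hk
  have hfac : (n:ℝ)/2 ≤ (n:ℝ) - ℓ - 0 + 1 := by linarith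
  have : (1:ℝ) * ((n:ℝ)/2) ≤ ((ℓ:ℝ) - 0) * ((n:ℝ) - ℓ - 0 + 1) := by
    apply mul_le_mul (by linarith) hfac (by linarith) (by linarith)
  linarith

lemma phiR_abs_le (hn : 2*k ≤ n) (hn1 : 1 ≤ n) {j : ℕ} (hj : j ≤ k) :
    |phiR n k j| ≤ 2*(k:ℝ)*n := by
  have hj' : (j:ℝ) ≤ k := by exact_mod_cast hj
  have hn' : 2*(k:ℝ) ≤ n := by exact_mod_cast hn
  have hj0 : (0:ℝ) ≤ j := Nat.cast_nonneg j
  have hk0 : (0:ℝ) ≤ k := Nat.cast_nonneg k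
  have habs : |phiR n k j| ≤ |((k:ℝ) - j)| * |((n:ℝ) - k - j)| + |(j:ℝ)| := by
    rw [phiR, ← abs_mul]
    exact abs_sub _ _
  have e1 : |((k:ℝ) - j)| ≤ k := by rw [abs_le]; constructor <;> linarith
  have e2 : |((n:ℝ) - k - j)| ≤ n := by rw [abs_le]; constructor <;> linarith
  have e3 : |(j:ℝ)| = j := abs_of_nonneg hj0
  have hn0 : (0:ℝ) ≤ n := Nat.cast_nonneg n
  have hn1' : (1:ℝ) ≤ n := by exact_mod_cast hn1
  have hmul : |((k:ℝ) - j)| * |((n:ℝ) - k - j)| ≤ (k:ℝ) * n :=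
    mul_le_mul e1 e2 (abs_nonneg _) hk0
  have hkk : (k:ℝ) ≤ (k:ℝ) * n := by nlinarith
  calc |phiR n k j| ≤ |((k:ℝ) - j)| * |((n:ℝ) - k - j)| + |(j:ℝ)| := habs
  _ ≤ (k:ℝ)*n + k := by rw [e3]; linarith
  _ ≤ 2*(k:ℝ)*n := by linarith

lemma qpoly_natDegree_lt (ℓ : ℕ) (hℓ : ℓ ≤ k) : (qpoly n k ℓ).natDegree < k + 1 := by
  have hmem : ℓ ∈ Finset.range (k+1) := Finset.mem_range.2 (by omega)
  have : (qpoly n k ℓ).natDegree = k := by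
    rw [qpoly, Polynomial.natDegree_prod _ _ (fun j _ => X_sub_C_ne_zero _)]
    simp only [natDegree_X_sub_C]
    rw [Finset.sum_const, smul_eq_mul, mul_one, Finset.card_erase_of_mem hmem,
      Finset.card_range]
    omega
  omega

lemma qpoly_entry_bound (hk : 1 ≤ k) (hn : 8*k+8 ≤ n) (δ : ℕ) (hδ1 : 1 ≤ δ) (hδk : δ ≤ k)
    (ℓ : ℕ) (hℓ : ℓ ≤ k) (a b : JV n k) (hab : (a.1 ∩ b.1).card = k - δ) :
    |(aeval (JA n k) (qpoly n k ℓ)) a b|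
      ≤ ((k:ℝ)+1) * (2^k * (2*(k:ℝ))^k * ((k:ℝ)^2+k+1)^k) * (n:ℝ)^((k:ℤ) - δ) := by
  have hn1 : 1 ≤ n := by omega
  have hn1' : (1:ℝ) ≤ n := by exact_mod_cast hn1
  have hn0 : (0:ℝ) < n := by linarith
  have hk' : (1:ℝ) ≤ k := by exact_mod_cast hk
  set K := (k:ℝ)^2 + k + 1 with hK
  have hK1 : (1:ℝ) ≤ K := by nlinarith
  set B := 2*(k:ℝ)*n with hB
  have hB1 : (1:ℝ) ≤ B := by nlinarith
  have hB0 : (0:ℝ) < B := by linarith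
  have h2k1 : (1:ℝ) ≤ 2*(k:ℝ) := by linarith
  have hmem : ℓ ∈ Finset.range (k+1) := Finset.mem_range.2 (by omega)
  have hcard : ((Finset.range (k+1)).erase ℓ).card = k := by
    rw [Finset.card_erase_of_mem hmem, Finset.card_range]
    omega
  have hcoeff : ∀ m : ℕ, |(qpoly n k ℓ).coeff m| ≤ 2^k * B^((k:ℤ) - m) := by
    intro m
    have := coeff_prod_bound B hB1 ((Finset.range (k+1)).erase ℓ) (fun j => phiR n k j)
      (fun j hj => by
        have hjr := Finset.mem_of_mem_erase hj
        rw [Finset.mem_range] at hjr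
        exact phiR_abs_le n k (by omega) hn1 (by omega)) m
    rw [hcard] at this
    exact this
  have htZ : (((a.1 ∩ b.1).card : ℤ)) = (k:ℤ) - δ := by
    rw [hab]
    omega
  have hterm : ∀ m ∈ Finset.range (k+1),
      |(qpoly n k ℓ).coeff m| * ((JA n k)^m) a b
        ≤ (2^k * (2*(k:ℝ))^k * K^k) * (n:ℝ)^((k:ℤ) - δ) := by
    intro m hm
    rw [Finset.mem_range] at hm
    have h1 := hcoeff m
    have h2 := walk_bound n k hk hn1 m a b
    have hA0 := JA_pow_nonneg n k m a b
    calc |(qpoly n k ℓ).coeff m| * ((JA n k)^m) a b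
        ≤ (2^k * B^((k:ℤ) - m)) * (K^m * (n:ℝ)^((m:ℤ) + (a.1 ∩ b.1).card - k)) := by
          apply mul_le_mul h1 h2 hA0
          positivity
    _ = 2^k * ((2*(k:ℝ))^((k:ℤ) - m) * K^m)
          * ((n:ℝ)^((k:ℤ) - m) * (n:ℝ)^((m:ℤ) + (a.1 ∩ b.1).card - k)) := by
          rw [hB, mul_zpow]
          ring
    _ ≤ 2^k * ((2*(k:ℝ))^k * K^k)
          * ((n:ℝ)^((k:ℤ) - m) * (n:ℝ)^((m:ℤ) + (a.1 ∩ b.1).card - k)) := by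
          apply mul_le_mul_of_nonneg_right _ (by positivity)
          apply mul_le_mul_of_nonneg_left _ (by positivity)
          have e1 : ((2*(k:ℝ))^(k:ℕ) : ℝ) = (2*(k:ℝ))^((k:ℕ):ℤ) := by
            rw [zpow_natCast]
          apply mul_le_mul
          · rw [e1]
            exact zpow_le_zpow_right₀ h2k1 (by omega)
          · exact pow_le_pow_right₀ hK1 (by omega)
          · positivity
          · positivity
    _ = (2^k * (2*(k:ℝ))^k * K^k) * (n:ℝ)^((k:ℤ) - δ) := by
          rw [← zpow_add₀ (ne_of_gt hn0)]
          rw [show ((k:ℤ) - m) + ((m:ℤ) + (a.1 ∩ b.1).card - k) = ((a.1 ∩ b.1).card : ℤ) by ring,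
            htZ]
          ring
  have hdeg := qpoly_natDegree_lt n k ℓ hℓ
  rw [Polynomial.aeval_eq_sum_range' hdeg]
  have hentry : (∑ i ∈ Finset.range (k+1), (qpoly n k ℓ).coeff i • (JA n k)^i) a b
      = ∑ i ∈ Finset.range (k+1), (qpoly n k ℓ).coeff i * ((JA n k)^i) a b := by
    rw [Matrix.sum_apply]
    apply Finset.sum_congr rfl
    intro i _
    rw [Matrix.smul_apply, smul_eq_mul]
  rw [hentry]
  calc |∑ i ∈ Finset.range (k+1), (qpoly n k ℓ).coeff i * ((JA n k)^i) a b|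
      ≤ ∑ i ∈ Finset.range (k+1), |(qpoly n k ℓ).coeff i * ((JA n k)^i) a b| :=
        Finset.abs_sum_le_sum_abs _ _
  _ ≤ ∑ i ∈ Finset.range (k+1), |(qpoly n k ℓ).coeff i| * ((JA n k)^i) a b := by
        apply Finset.sum_le_sum
        intro i _
        rw [abs_mul, abs_of_nonneg (JA_pow_nonneg n k i a b)]
  _ ≤ (k+1) • ((2^k * (2*(k:ℝ))^k * K^k) * (n:ℝ)^((k:ℤ) - δ)) := by
        have := Finset.sum_le_card_nsmul (Finset.range (k+1))
          (fun i => |(qpoly n k ℓ).coeff i| * ((JA n k)^i) a b)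
          ((2^k * (2*(k:ℝ))^k * K^k) * (n:ℝ)^((k:ℤ) - δ)) hterm
        rwa [Finset.card_range] at this
  _ = ((k:ℝ)+1) * (2^k * (2*(k:ℝ))^k * K^k) * (n:ℝ)^((k:ℤ) - δ) := by
        rw [nsmul_eq_mul]
        push_cast
        ring

end main


theorem stmt14 (k δ : ℕ) (hk : 1 ≤ k) (hδ1 : 1 ≤ δ) (hδk : δ ≤ k) :
    ∃ C : ℝ, 0 < C ∧ ∃ n0 : ℕ, ∀ n : ℕ, n0 ≤ n →
      ∀ w1 w2 : JV n k, (w1.1 ∩ w2.1).card = k - δ →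
        ∀ P : Fin (k+1) → Matrix (JV n k) (JV n k) ℝ,
          (∀ ℓ, IsOrthProj (JA n k) (jphi n k ℓ) (P ℓ)) →
          |Ssum n k P w1 w2 1| ≤ C / (n : ℝ) ^ (δ + 1) ∧
            |Ssum n k P w1 w2 2| ≤ C / (n : ℝ) ^ (δ + 2) := by
  set G : ℝ := ((k:ℝ)+1) * (2^k * (2*(k:ℝ))^k * ((k:ℝ)^2+(k:ℝ)+1)^k) with hG
  have hG0 : 0 < G := by positivity
  set C1 : ℝ := 2^k * G * 4 with hC1
  have hC10 : 0 < C1 := by positivity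
  refine ⟨((k:ℝ)+1) * C1, by positivity, 8*k+8, ?_⟩
  intro n hn w1 w2 hw P hP
  have hn1 : 1 ≤ n := by omega
  have hn1' : (1:ℝ) ≤ n := by exact_mod_cast hn1
  have hn0 : (0:ℝ) < n := by linarith
  have hkn : k ≤ n := by omega
  have h4k : 4*k ≤ n := by omega
  have key : ∀ r : ℕ, 1 ≤ r → r ≤ 2 → |Ssum n k P w1 w2 r| ≤ ((k:ℝ)+1) * C1 / (n:ℝ)^(δ+r) := by
    intro r hr1 hr2
    have hterm : ∀ ℓ ∈ Finset.Ioi (0 : Fin (k+1)),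
        |P ℓ w1 w2 / (jphi n k 0 - jphi n k ℓ) ^ r| ≤ C1 / (n:ℝ)^(δ+r) := by
      intro ℓ hℓmem
      have hℓ1 : 1 ≤ ℓ.val := by
        rw [Finset.mem_Ioi] at hℓmem
        exact hℓmem
      have hℓk : ℓ.val ≤ k := by omega
      -- dval nonzero
      have hdlow := dval_lower n k h4k hn1 hℓk
      have hdpos : 0 < |dval n k ℓ.val| := lt_of_lt_of_le (by positivity) hdlow
      have hd : dval n k ℓ.val ≠ 0 := by
        intro h
        rw [h, abs_zero] at hdpos
        exact lt_irrefl _ hdpos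
      -- identify P ℓ
      have hPeq : P ℓ = (dval n k ℓ.val)⁻¹ • aeval (JA n k) (qpoly n k ℓ.val) :=
        proj_eq n k hkn ℓ.val (Finset.mem_range.2 ℓ.isLt) (P ℓ) (hP ℓ) hd
      -- entry bound
      have hQ := qpoly_entry_bound n k hk hn δ hδ1 hδk ℓ.val hℓk w1 w2 hw
      -- |P ℓ w1 w2| bound
      have hP1 : |P ℓ w1 w2| ≤ 2^k * G * (n:ℝ)^(-(δ:ℤ)) := by
        rw [hPeq, Matrix.smul_apply, smul_eq_mul, abs_mul, abs_inv]
        have hinv : |dval n k ℓ.val|⁻¹ ≤ (((n:ℝ)/2)^k)⁻¹ := by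
          apply inv_anti₀ (by positivity) hdlow
        calc |dval n k ℓ.val|⁻¹ * |(aeval (JA n k) (qpoly n k ℓ.val)) w1 w2|
            ≤ (((n:ℝ)/2)^k)⁻¹ * (G * (n:ℝ)^((k:ℤ) - δ)) := by
              apply mul_le_mul hinv _ (abs_nonneg _) (by positivity)
              rw [hG]
              exact hQ
        _ = 2^k * G * (n:ℝ)^(-(δ:ℤ)) := by
              have hinv2 : (((n:ℝ)/2)^k)⁻¹ = 2^k * (n:ℝ)^(-(k:ℤ)) := by
                rw [div_pow, inv_div, div_eq_mul_inv]
                congr 1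
                rw [_root_.zpow_neg, zpow_natCast]
              rw [hinv2, show (2:ℝ)^k * (n:ℝ)^(-(k:ℤ)) * (G * (n:ℝ)^((k:ℤ)-δ))
                = 2^k * G * ((n:ℝ)^(-(k:ℤ)) * (n:ℝ)^((k:ℤ)-(δ:ℤ))) from by ring,
                ← zpow_add₀ (ne_of_gt hn0)]
              congr 2
              ring
      -- denominator bound
      have hgap : (n:ℝ)/2 ≤ jphi n k 0 - jphi n k ℓ := by
        have : jphi n k 0 - jphi n k ℓ = phiR n k 0 - phiR n k ℓ.val := rfl
        rw [this]
        exact phi0_gap n k h4k hk hℓ1 hℓk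
      have hgappos : 0 < jphi n k 0 - jphi n k ℓ := lt_of_lt_of_le (by positivity) hgap
      have hden : (((n:ℝ)/2)^r) ≤ (jphi n k 0 - jphi n k ℓ)^r :=
        pow_le_pow_left₀ (by positivity) hgap r
      have hdeninv : |((jphi n k 0 - jphi n k ℓ)^r)⁻¹| ≤ 4 * (n:ℝ)^(-(r:ℤ)) := by
        rw [abs_inv, abs_of_nonneg (by positivity : (0:ℝ) ≤ (jphi n k 0 - jphi n k ℓ)^r)]
        calc ((jphi n k 0 - jphi n k ℓ)^r)⁻¹ ≤ (((n:ℝ)/2)^r)⁻¹ :=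
              inv_anti₀ (by positivity) hden
        _ = 2^r * (n:ℝ)^(-(r:ℤ)) := by
              rw [div_pow, inv_div, div_eq_mul_inv]
              congr 1
              rw [_root_.zpow_neg, zpow_natCast]
        _ ≤ 4 * (n:ℝ)^(-(r:ℤ)) := by
              apply mul_le_mul_of_nonneg_right _ (by positivity)
              calc (2:ℝ)^r ≤ 2^2 := pow_le_pow_right₀ (by norm_num) hr2
              _ = 4 := by norm_num
      calc |P ℓ w1 w2 / (jphi n k 0 - jphi n k ℓ) ^ r|
          = |P ℓ w1 w2| * |((jphi n k 0 - jphi n k ℓ)^r)⁻¹| := by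
            rw [div_eq_mul_inv, abs_mul]
      _ ≤ (2^k * G * (n:ℝ)^(-(δ:ℤ))) * (4 * (n:ℝ)^(-(r:ℤ))) :=
            mul_le_mul hP1 hdeninv (abs_nonneg _) (by positivity)
      _ = C1 / (n:ℝ)^(δ+r) := by
            have hpowinv : ((n:ℝ)^(δ+r))⁻¹ = (n:ℝ)^(-(δ:ℤ)) * (n:ℝ)^(-(r:ℤ)) := by
              rw [← zpow_add₀ (ne_of_gt hn0), ← zpow_natCast (n:ℝ) (δ+r), ← _root_.zpow_neg]
              congr 1
              push_cast
              ring
            rw [hC1, div_eq_mul_inv, hpowinv]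
            ring
    rw [Ssum]
    calc |∑ ℓ ∈ Finset.Ioi (0 : Fin (k+1)), P ℓ w1 w2 / (jphi n k 0 - jphi n k ℓ) ^ r|
        ≤ ∑ ℓ ∈ Finset.Ioi (0 : Fin (k+1)), |P ℓ w1 w2 / (jphi n k 0 - jphi n k ℓ) ^ r| :=
          Finset.abs_sum_le_sum_abs _ _
    _ ≤ (Finset.Ioi (0 : Fin (k+1))).card • (C1 / (n:ℝ)^(δ+r)) :=
          Finset.sum_le_card_nsmul _ _ _ hterm
    _ ≤ ((k:ℝ)+1) * C1 / (n:ℝ)^(δ+r) := by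
          rw [nsmul_eq_mul]
          have hcard : (Finset.Ioi (0 : Fin (k+1))).card ≤ k+1 := by
            calc (Finset.Ioi (0 : Fin (k+1))).card ≤ (Finset.univ : Finset (Fin (k+1))).card :=
                  Finset.card_le_card (Finset.subset_univ _)
            _ = k+1 := by rw [Finset.card_univ, Fintype.card_fin]
          have hcardR : ((Finset.Ioi (0 : Fin (k+1))).card : ℝ) ≤ (k:ℝ)+1 := by
            calc ((Finset.Ioi (0 : Fin (k+1))).card : ℝ) ≤ ((k+1 : ℕ) : ℝ) := by
                  exact_mod_cast hcard
            _ = (k:ℝ)+1 := by push_cast; ring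
          have hx : (0:ℝ) ≤ C1 / (n:ℝ)^(δ+r) := by positivity
          calc ((Finset.Ioi (0 : Fin (k+1))).card : ℝ) * (C1 / (n:ℝ)^(δ+r))
              ≤ ((k:ℝ)+1) * (C1 / (n:ℝ)^(δ+r)) := mul_le_mul_of_nonneg_right hcardR hx
          _ = ((k:ℝ)+1) * C1 / (n:ℝ)^(δ+r) := by rw [hC1]; ring
  exact ⟨key 1 le_rfl (by norm_num), key 2 (by norm_num) le_rfl⟩
end
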